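/- arXiv:math/0311018 — 10 statements merged into one kernel-verified Lean document; each statement's English description precedes it below -/
import Mathlib

section
/- Let λ be a FLOTW d-partition associated to {e; v_0,...,v_{d-1}}, let ξ be a removable node on part λ^(i1)_{j1}, and let λ^(i2)_{j2} be a part with λ^(i2)_{j2} − j2 + v_{i2} ≡ λ^(i1)_{j1} − j1 + v_{i1} − 1 (mod e). Then λ^(i2)_{j2} ≥ λ^(i1)_{j1} if and only if λ^(i2)_{j2} − j2 + m^(i2) + 1 ≥ λ^(i1)_{j1} − j1 + m^(i1). -/
/-- A `d`-partition (components indexed by `c < d`, rows indexed from `0`)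
is a FLOTW `d`-partition for `{e; v_0,…,v_{d-1}}` if the parts are weakly
decreasing, the two chains of inequalities hold, and for every `k > 0` some
residue of `ℤ/eℤ` does not occur at the right ends of the length-`k` rows. -/
def IsFLOTW (d e : ℕ) (v : ℕ → ℕ) (part : ℕ → ℕ → ℕ) : Prop :=
  (∀ c, ∀ j k, j ≤ k → part c k ≤ part c j) ∧
  (∀ j, j + 1 < d → ∀ i, part (j + 1) (i + (v (j + 1) - v j)) ≤ part j i) ∧
  (∀ i, part 0 (i + (e + v 0 - v (d - 1))) ≤ part (d - 1) i) ∧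
  (∀ k : ℕ, 0 < k → ∃ ρ : ZMod e, ∀ c, c < d → ∀ r, part c r = k →
      (((k : ℤ) - ((r : ℤ) + 1) + (v c : ℤ) : ℤ) : ZMod e) ≠ ρ)


section Aux
variable {d e : ℕ} {v : ℕ → ℕ} {part : ℕ → ℕ → ℕ}

lemma chainUp (hstep : ∀ j, j + 1 < d → ∀ i, part (j + 1) (i + (v (j + 1) - v j)) ≤ part j i)
    (hvm : ∀ i j, i ≤ j → v i ≤ v j) :
    ∀ c1 c2, c1 ≤ c2 → c2 < d → ∀ r, part c2 (r + (v c2 - v c1)) ≤ part c1 r := by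
  intro c1 c2 h
  induction c2, h using Nat.le_induction with
  | base => intro _ r; simp
  | succ n hn ih =>
    intro hnd r
    have h1 : part n (r + (v n - v c1)) ≤ part c1 r := ih (by omega) r
    have h2 : part (n+1) ((r + (v n - v c1)) + (v (n+1) - v n)) ≤ part n (r + (v n - v c1)) :=
      hstep n hnd _
    have e1 : v c1 ≤ v n := hvm _ _ hn
    have e2 : v n ≤ v (n+1) := hvm _ _ (by omega)
    have heq : r + (v (n+1) - v c1) = (r + (v n - v c1)) + (v (n+1) - v n) := by omega
    rw [heq]
    exact le_trans h2 h1

lemma loopStep (hstep : ∀ j, j + 1 < d → ∀ i, part (j + 1) (i + (v (j + 1) - v j)) ≤ part j i)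
    (hwrap : ∀ i, part 0 (i + (e + v 0 - v (d - 1))) ≤ part (d - 1) i)
    (hvm : ∀ i j, i ≤ j → v i ≤ v j) (hve : ∀ i, i < d → v i < e) (hd : 0 < d)
    (c : ℕ) (hc : c < d) (r : ℕ) : part c (r + e) ≤ part c r := by
  have h1 : part (d-1) (r + (v (d-1) - v c)) ≤ part c r :=
    chainUp hstep hvm c (d-1) (by omega) (by omega) r
  have h2 := hwrap (r + (v (d-1) - v c))
  have h3 : part c ((r + (v (d-1) - v c) + (e + v 0 - v (d-1))) + (v c - v 0)) ≤
      part 0 (r + (v (d-1) - v c) + (e + v 0 - v (d-1))) :=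
    chainUp hstep hvm 0 c (by omega) hc _
  have e1 : v c ≤ v (d-1) := hvm _ _ (by omega)
  have e2 : v 0 ≤ v c := hvm _ _ (by omega)
  have e3 : v (d-1) < e := hve _ (by omega)
  have heq : (r + (v (d-1) - v c) + (e + v 0 - v (d-1))) + (v c - v 0) = r + e := by omega
  rw [heq] at h3
  exact le_trans (le_trans h3 h2) h1

lemma loops (hstep : ∀ j, j + 1 < d → ∀ i, part (j + 1) (i + (v (j + 1) - v j)) ≤ part j i)
    (hwrap : ∀ i, part 0 (i + (e + v 0 - v (d - 1))) ≤ part (d - 1) i)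
    (hvm : ∀ i j, i ≤ j → v i ≤ v j) (hve : ∀ i, i < d → v i < e) (hd : 0 < d)
    (c : ℕ) (hc : c < d) (r : ℕ) : ∀ t : ℕ, part c (r + t * e) ≤ part c r := by
  intro t
  induction t with
  | zero => simp
  | succ n ih =>
    have := loopStep hstep hwrap hvm hve hd c hc (r + n * e)
    have heq : r + (n+1) * e = (r + n * e) + e := by ring
    rw [heq]
    exact le_trans this ih

lemma master (hmono : ∀ c, ∀ j k, j ≤ k → part c k ≤ part c j)
    (hstep : ∀ j, j + 1 < d → ∀ i, part (j + 1) (i + (v (j + 1) - v j)) ≤ part j i)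
    (hwrap : ∀ i, part 0 (i + (e + v 0 - v (d - 1))) ≤ part (d - 1) i)
    (hvm : ∀ i j, i ≤ j → v i ≤ v j) (hve : ∀ i, i < d → v i < e) (hd : 0 < d)
    (c1 c2 : ℕ) (hc1 : c1 < d) (hc2 : c2 < d) (t : ℕ) (ht : 1 ≤ t ∨ c1 ≤ c2)
    (r r' : ℕ) (hr : (r:ℤ) + (v c2 : ℤ) - (v c1 : ℤ) + (t:ℤ) * (e:ℤ) ≤ (r':ℤ)) :
    part c2 r' ≤ part c1 r := by
  rcases le_or_gt c1 c2 with hle | hlt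
  · have e1 : v c1 ≤ v c2 := hvm _ _ hle
    have h1 : part c2 (r + (v c2 - v c1)) ≤ part c1 r := chainUp hstep hvm c1 c2 hle hc2 r
    have h2 : part c2 (r + (v c2 - v c1) + t * e) ≤ part c2 (r + (v c2 - v c1)) :=
      loops hstep hwrap hvm hve hd c2 hc2 _ t
    have h3 : r + (v c2 - v c1) + t * e ≤ r' := by omega
    exact le_trans (le_trans (hmono c2 _ _ h3) h2) h1
  · have ht1 : 1 ≤ t := by omega
    obtain ⟨u, rfl⟩ : ∃ u, t = u + 1 := ⟨t - 1, by omega⟩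
    have e1 : v c1 ≤ v (d-1) := hvm _ _ (by omega)
    have e2 : v 0 ≤ v c2 := hvm _ _ (by omega)
    have e3 : v (d-1) < e := hve _ (by omega)
    have h1 : part (d-1) (r + (v (d-1) - v c1)) ≤ part c1 r :=
      chainUp hstep hvm c1 (d-1) (by omega) (by omega) r
    have h2 := hwrap (r + (v (d-1) - v c1))
    have h3 : part c2 ((r + (v (d-1) - v c1) + (e + v 0 - v (d-1))) + (v c2 - v 0)) ≤
        part 0 (r + (v (d-1) - v c1) + (e + v 0 - v (d-1))) :=
      chainUp hstep hvm 0 c2 (by omega) hc2 _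
    set z := (r + (v (d-1) - v c1) + (e + v 0 - v (d-1))) + (v c2 - v 0) with hz
    have h4 : part c2 (z + u * e) ≤ part c2 z :=
      loops hstep hwrap hvm hve hd c2 hc2 z u
    have hr' : (r:ℤ) + (v c2 : ℤ) - (v c1 : ℤ) + (e:ℤ) + (u:ℤ) * (e:ℤ) ≤ (r':ℤ) := by
      push_cast at hr; linarith
    have h5 : z + u * e ≤ r' := by
      have : (z : ℤ) = (r:ℤ) + e + v c2 - v c1 := by omega
      omega
    exact le_trans (le_trans (hmono c2 _ _ h5) h4) (le_trans h3 (le_trans h2 h1))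

end Aux

/-- Lemma on the comparison of parts with adjacent residues.
Let `λ` be a FLOTW `d`-partition, `ξ` a removable node on the part
`λ^(i1)_{j1}` (rows `j1, j2` indexed from `1`), and `λ^(i2)_{j2}` a part with
`λ^(i2)_{j2} − j2 + v_{i2} ≡ λ^(i1)_{j1} − j1 + v_{i1} − 1 (mod e)`.  Then
`λ^(i2)_{j2} ≥ λ^(i1)_{j1}` iff
`λ^(i2)_{j2} − j2 + m^(i2) + 1 ≥ λ^(i1)_{j1} − j1 + m^(i1)`. -/
theorem stmt4 (d e e' s : ℕ) (hd : 0 < d) (he : 0 < e) (hee : e = d * e')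
    (v : ℕ → ℕ) (hvmono : ∀ i j, i ≤ j → v i ≤ v j) (hve : ∀ i, i < d → v i < e)
    (m : ℕ → ℤ) (hm : ∀ j, m j = (v j : ℤ) - (j : ℤ) * (e' : ℤ) + (s : ℤ) * (e : ℤ))
    (hm0 : ∀ j, j < d → 0 ≤ m j)
    (part : ℕ → ℕ → ℕ) (hflotw : IsFLOTW d e v part)
    (hfin : ∃ N, ∀ c r, N ≤ r → part c r = 0)
    (i1 i2 j1 j2 : ℕ) (hi1 : i1 < d) (hi2 : i2 < d) (hj1 : 1 ≤ j1) (hj2 : 1 ≤ j2)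
    (hpos : 0 < part i1 (j1 - 1))
    (hrem : part i1 j1 < part i1 (j1 - 1))
    (hcong : (((part i2 (j2 - 1) : ℤ) - (j2 : ℤ) + (v i2 : ℤ) : ℤ) : ZMod e)
        = (((part i1 (j1 - 1) : ℤ) - (j1 : ℤ) + (v i1 : ℤ) - 1 : ℤ) : ZMod e)) :
    part i1 (j1 - 1) ≤ part i2 (j2 - 1) ↔
      (part i1 (j1 - 1) : ℤ) - (j1 : ℤ) + m i1 ≤
        (part i2 (j2 - 1) : ℤ) - (j2 : ℤ) + m i2 + 1 := by
  obtain ⟨hmono, hstep, hwrap, -⟩ := hflotw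
  have he' : 0 < e' := by
    rcases Nat.eq_zero_or_pos e' with h0 | h
    · subst h0; simp at hee; omega
    · exact h
  have hmod := (ZMod.intCast_eq_intCast_iff _ _ _).mp hcong
  obtain ⟨K, hK⟩ := hmod.dvd
  have hde : (e:ℤ) = (d:ℤ) * (e':ℤ) := by exact_mod_cast hee
  have he'Z : (0:ℤ) < (e':ℤ) := by exact_mod_cast he'
  have heZ : (0:ℤ) < (e:ℤ) := by exact_mod_cast he
  have h1 : (i1:ℤ) - (i2:ℤ) ≤ (d:ℤ) - 1 := by omega
  have h2 : -((d:ℤ) - 1) ≤ (i1:ℤ) - (i2:ℤ) := by omega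
  have key1 : ((i1:ℤ) - i2) * e' ≤ ((d:ℤ) - 1) * e' :=
    mul_le_mul_of_nonneg_right h1 (by positivity)
  have key2 : (-((d:ℤ) - 1)) * e' ≤ ((i1:ℤ) - i2) * e' :=
    mul_le_mul_of_nonneg_right h2 (by positivity)
  have expand : ((d:ℤ) - 1) * e' = (d:ℤ) * e' - e' := by ring
  have expand2 : (-((d:ℤ) - 1)) * e' = -((d:ℤ) * e') + e' := by ring
  have hb1 : ((i1:ℤ) - i2) * e' < (e:ℤ) := by linarith
  have hb2 : -(e:ℤ) < ((i1:ℤ) - i2) * e' := by linarith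
  have exp2 : ((i1:ℤ) - i2) * e' = (i1:ℤ) * e' - (i2:ℤ) * e' := by ring
  rw [hm i1, hm i2]
  constructor
  · intro hab
    by_contra hcon
    push_neg at hcon
    have hPgt : ((i1:ℤ) - i2) * e' < (e:ℤ) * K := by linarith
    have hKcase : 1 ≤ K ∨ (K = 0 ∧ i1 < i2) := by
      rcases lt_trichotomy K 0 with h | h | h
      · exfalso
        have hh : (e:ℤ) * K ≤ (e:ℤ) * (-1) := mul_le_mul_of_nonneg_left (by omega) heZ.le
        have : (e:ℤ) * (-1) = -(e:ℤ) := by ring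
        linarith
      · right
        refine ⟨h, ?_⟩
        by_contra hc
        push_neg at hc
        have h0 : (0:ℤ) ≤ (i1:ℤ) - i2 := by omega
        have := mul_nonneg h0 he'Z.le
        rw [h] at hPgt
        simp at hPgt
        linarith
      · left; omega
    have htK : (K.toNat : ℤ) = K := Int.toNat_of_nonneg (by omega)
    have hmul : (K.toNat : ℤ) * (e:ℤ) = (e:ℤ) * K := by rw [htK]; ring
    have happ : part i2 (j2 - 1) ≤ part i1 j1 := by
      refine master hmono hstep hwrap hvmono hve hd i1 i2 hi1 hi2 K.toNat (by omega)
        j1 (j2 - 1) ?_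
      omega
    omega
  · intro hineq
    have hPle : (e:ℤ) * K ≤ ((i1:ℤ) - i2) * e' := by linarith
    by_contra hab
    push_neg at hab
    have hKcase : K ≤ -1 ∨ (K = 0 ∧ i2 ≤ i1) := by
      rcases lt_trichotomy K 0 with h | h | h
      · left; omega
      · right
        refine ⟨h, ?_⟩
        by_contra hc
        push_neg at hc
        have h0 : (i1:ℤ) - i2 ≤ -1 := by omega
        have hh : ((i1:ℤ) - i2) * e' ≤ (-1) * e' := mul_le_mul_of_nonneg_right h0 he'Z.le
        rw [h] at hPle
        simp at hPle
        linarith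
      · exfalso
        have hh : (e:ℤ) * 1 ≤ (e:ℤ) * K := mul_le_mul_of_nonneg_left (by omega) heZ.le
        linarith
    have htK : ((-K).toNat : ℤ) = -K := Int.toNat_of_nonneg (by omega)
    have hmul : ((-K).toNat : ℤ) * (e:ℤ) = -((e:ℤ) * K) := by rw [htK]; ring
    have happ : part i1 (j1 - 1) ≤ part i2 (j2 - 1) := by
      refine master hmono hstep hwrap hvmono hve hd i2 i1 hi2 hi1 (-K).toNat (by omega)
        (j2 - 1) (j1 - 1) ?_
      omega
    omega
end

section
/- Let λ be a nonempty FLOTW d-partition and l_max the maximal part length occurring in λ. Then there exists a removable node ξ of residue k (for some k) on a part of length l_max such that no node of residue k−1 (mod e) lies on the border of any part of λ of length l_max. -/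
/-- The residue of the border node (right end) of row `r` (indexed from `0`)
of component `c`. -/
def bres (e : ℕ) (v : ℕ → ℕ) (part : ℕ → ℕ → ℕ) (c r : ℕ) : ZMod e :=
  (((part c r : ℤ) - ((r : ℤ) + 1) + (v c : ℤ) : ℤ) : ZMod e)

/-- let `λ` be a nonempty FLOTW `d`-partition and `lmax` the
maximal part length.  Then there is a removable node of some residue `k` on a
part of length `lmax` such that no node of residue `k − 1` lies on the border
of a part of length `lmax`. -/
theorem stmt5 (d e : ℕ) (hd : 0 < d) (he : 0 < e)
    (v : ℕ → ℕ) (hvmono : ∀ i j, i ≤ j → v i ≤ v j) (hve : ∀ i, i < d → v i < e)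
    (part : ℕ → ℕ → ℕ) (hflotw : IsFLOTW d e v part)
    (hfin : ∃ N, ∀ c r, N ≤ r → part c r = 0)
    (lmax : ℕ) (hpos : 0 < lmax)
    (hub : ∀ c, c < d → part c 0 ≤ lmax)
    (hattained : ∃ c, c < d ∧ part c 0 = lmax) :
    ∃ c r, c < d ∧ part c r = lmax ∧ part c (r + 1) < lmax ∧
      ∀ c' r', c' < d → part c' r' = lmax →
        bres e v part c' r' ≠ bres e v part c r - 1 := by
  classical
  haveI : NeZero e := ⟨he.ne'⟩
  obtain ⟨hmono, -, -, hres⟩ := hflotw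
  obtain ⟨ρ, hρ⟩ := hres lmax hpos
  set S : ZMod e → Prop := fun x => ∃ c r, c < d ∧ part c r = lmax ∧ bres e v part c r = x
    with hSdef
  have hρS : ¬ S ρ := by
    rintro ⟨c, r, hc, hp, hb⟩
    apply hρ c hc r hp
    rw [← hb]; simp [bres, hp]
  -- stepping: if a row of length lmax is followed by another, residue drops by 1
  have hstep : ∀ c r, c < d → part c r = lmax → part c (r + 1) = lmax →
      S (bres e v part c r - 1) := by
    intro c r hc hp hp'
    refine ⟨c, r + 1, hc, hp', ?_⟩
    simp only [bres, hp, hp']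
    push_cast
    ring
  obtain ⟨c0, hc0, hp0⟩ := hattained
  set s0 := bres e v part c0 0 with hs0
  have hs0S : S s0 := ⟨c0, 0, hc0, hp0, rfl⟩
  have hexj : ∃ j : ℕ, ¬ S (s0 - (j : ZMod e)) := by
    refine ⟨(s0 - ρ).val, ?_⟩
    have h : s0 - (((s0 - ρ).val : ℕ) : ZMod e) = ρ := by
      rw [ZMod.natCast_val, ZMod.cast_id]; ring
    rw [h]; exact hρS
  set j1 := Nat.find hexj with hj1def
  have hj1 : ¬ S (s0 - (j1 : ZMod e)) := Nat.find_spec hexj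
  have hj1pos : 0 < j1 := by
    rcases Nat.eq_zero_or_pos j1 with h | h
    · exfalso; apply hj1; rw [h]; simpa using hs0S
    · exact h
  have hmem : S (s0 - ((j1 - 1 : ℕ) : ZMod e)) :=
    not_not.mp (Nat.find_min hexj (Nat.sub_lt hj1pos one_pos))
  have hkey : s0 - ((j1 - 1 : ℕ) : ZMod e) - 1 = s0 - (j1 : ZMod e) := by
    rw [Nat.cast_sub hj1pos]; push_cast; ring
  obtain ⟨c, r, hc, hp, hb⟩ := hmem
  have hnot : ¬ S (bres e v part c r - 1) := by
    rw [hb, hkey]; exact hj1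
  refine ⟨c, r, hc, hp, ?_, ?_⟩
  · have hle : part c (r + 1) ≤ lmax := hp ▸ hmono c r (r + 1) (Nat.le_succ r)
    rcases lt_or_eq_of_le hle with h | h
    · exact h
    · exact absurd (hstep c r hc hp h) hnot
  · intro c' r' hc' hp' heq
    exact hnot ⟨c', r', hc', hp', heq⟩
end

section
/- Let λ be a FLOTW d-partition, and let k, ξ_1 be as in the maximal-length lemma (ξ_1 a removable k-node on a part of maximal length with no (k−1)-node on the border of a part of the same length). Let ξ_1,...,ξ_s be all the removable k-nodes of λ, lying on parts λ^(i1)_{j1} ≥ ... ≥ λ^(is)_{js}, and let λ^(l1)_{p1} be the largest part carrying a (k−1)-node on its border (or 0 if none). Remove from λ all nodes ξ_u with λ^(iu)_{ju} > λ^(l1)_{p1}. Then the resulting d-tuple λ' is again a FLOTW d-partition, of rank strictly smaller than the rank of λ. -/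
/-- Row `r` of component `c` carries a removable node. -/
def Removable (part : ℕ → ℕ → ℕ) (c r : ℕ) : Prop :=
  0 < part c r ∧ part c (r + 1) < part c r

open scoped Classical in
/-- let `λ` be a FLOTW `d`-partition, `k` the residue of a
removable node on a part of maximal length `lmax` such that no `(k−1)`-node
lies on the border of a length-`lmax` part; let `T` be the length of the
largest part carrying a border `(k−1)`-node (`0` if none).  Removing from `λ`
all removable `k`-nodes on parts of length `> T` yields a FLOTW `d`-partition
of strictly smaller rank. -/
theorem stmt6 (d e N : ℕ) (hd : 0 < d) (he : 0 < e)
    (v : ℕ → ℕ) (hvmono : ∀ i j, i ≤ j → v i ≤ v j) (hve : ∀ i, i < d → v i < e)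
    (part : ℕ → ℕ → ℕ) (hflotw : IsFLOTW d e v part)
    (hN : ∀ c r, N ≤ r → part c r = 0)
    (lmax : ℕ) (hpos : 0 < lmax) (hub : ∀ c, c < d → part c 0 ≤ lmax)
    (k : ZMod e) (c0 r0 : ℕ) (hc0 : c0 < d)
    (h0max : part c0 r0 = lmax) (h0rem : Removable part c0 r0)
    (h0res : bres e v part c0 r0 = k)
    (hnoprev : ∀ c r, c < d → part c r = lmax → bres e v part c r ≠ k - 1)
    (T : ℕ)
    (hT : ∀ c r, c < d → 0 < part c r → bres e v part c r = k - 1 → part c r ≤ T)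
    (hTatt : T = 0 ∨ ∃ c r, c < d ∧ 0 < part c r ∧
      bres e v part c r = k - 1 ∧ part c r = T)
    (part' : ℕ → ℕ → ℕ)
    (hpart' : ∀ c r, part' c r = part c r -
      (if Removable part c r ∧ bres e v part c r = k ∧ T < part c r then 1 else 0)) :
    IsFLOTW d e v part' ∧
      ∑ c ∈ Finset.range d, ∑ r ∈ Finset.range N, part' c r <
        ∑ c ∈ Finset.range d, ∑ r ∈ Finset.range N, part c r := by
  obtain ⟨hrow, hc2, hc3, hc4⟩ := hflotw
  -- e = 1 is impossible
  by_cases he1 : e = 1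
  · exfalso
    obtain ⟨ρ, hρ⟩ := hc4 lmax hpos
    exact hρ c0 hc0 r0 h0max (by subst he1; exact Subsingleton.elim _ _)
  haveI : Fact (1 < e) := ⟨by omega⟩
  have hone : (k - 1 : ZMod e) ≠ k := by
    intro h
    exact one_ne_zero (sub_eq_self.mp h)
  -- T < lmax
  have hTlt : T < lmax := by
    have hTle : T ≤ lmax := by
      rcases hTatt with h0 | ⟨c, r, hcd, hp, hres, hTeq⟩
      · omega
      · have h1 : part c r ≤ part c 0 := hrow c 0 r (Nat.zero_le r)
        have h2 := hub c hcd
        omega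
    rcases lt_or_eq_of_le hTle with h | h
    · exact h
    · exfalso
      rcases hTatt with h0 | ⟨c, r, hcd, hp, hres, hTeq⟩
      · omega
      · exact hnoprev c r hcd (by omega) hres
  -- basic bounds
  have hle : ∀ c r, part' c r ≤ part c r := by
    intro c r; rw [hpart']; split <;> omega
  -- a bordered k-node on a part of length > T is automatically removable
  have hforce : ∀ c r, c < d → bres e v part c r = k → T < part c r →
      Removable part c r := by
    intro c r hcd hbr hTr
    refine ⟨by omega, ?_⟩
    by_contra hno
    have heq : part c (r+1) = part c r :=
      le_antisymm (hrow c r (r+1) (Nat.le_succ r)) (by omega)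
    have hb1 : bres e v part c (r+1) = bres e v part c r - 1 := by
      simp only [bres, heq]
      push_cast
      ring
    have := hT c (r+1) hcd (by omega) (by rw [hb1, hbr])
    omega
  -- rows of part' are weakly decreasing
  have hstep : ∀ c r, part' c (r+1) ≤ part' c r := by
    intro c r
    have h1 := hle c (r+1)
    have h2 := hrow c r (r+1) (Nat.le_succ r)
    by_cases h : Removable part c r ∧ bres e v part c r = k ∧ T < part c r
    · have h3 : part c (r+1) < part c r := h.1.2
      rw [hpart' c r, if_pos h]
      omega
    · rw [hpart' c r, if_neg h]
      omega
  have hmono : ∀ c, ∀ j j', j ≤ j' → part' c j' ≤ part' c j := by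
    intro c j j' h
    exact antitone_nat_of_succ_le (hstep c) h
  -- key comparison lemma for cells with equal contents
  have key : ∀ c r c' r', c' < d → part c' r' ≤ part c r →
      ((((v c' : ℤ) - ((r' : ℤ) + 1)) : ℤ) : ZMod e) =
        ((((v c : ℤ) - ((r : ℤ) + 1)) : ℤ) : ZMod e) →
      part' c' r' ≤ part' c r := by
    intro c r c' r' hc' hpr hcon
    by_cases hδ : Removable part c r ∧ bres e v part c r = k ∧ T < part c r
    · rcases Nat.lt_or_ge (part c' r') (part c r) with hlt | hge
      · have := hle c' r'
        rw [hpart' c r, if_pos hδ]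
        omega
      · have heq : part c' r' = part c r := le_antisymm hpr hge
        have hres' : bres e v part c' r' = k := by
          have e1 : bres e v part c' r' =
              ((part c' r' : ℤ) : ZMod e) + ((((v c' : ℤ) - ((r' : ℤ) + 1)) : ℤ) : ZMod e) := by
            simp only [bres]; push_cast; ring
          have e2 : bres e v part c r =
              ((part c r : ℤ) : ZMod e) + ((((v c : ℤ) - ((r : ℤ) + 1)) : ℤ) : ZMod e) := by
            simp only [bres]; push_cast; ring
          rw [e1, heq, hcon, ← e2, hδ.2.1]
        have hT' : T < part c' r' := heq ▸ hδ.2.2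
        have hrem' := hforce c' r' hc' hres' hT'
        rw [hpart' c r, if_pos hδ, hpart' c' r', if_pos ⟨hrem', hres', hT'⟩]
        omega
    · rw [hpart' c r, if_neg hδ]
      exact (hle c' r').trans hpr
  -- strict decrease location
  have hr0N : r0 < N := by
    by_contra h
    have := hN c0 r0 (by omega)
    omega
  refine ⟨⟨fun c j j' h => hmono c j j' h, ?_, ?_, ?_⟩, ?_⟩
  · -- condition 2
    intro j hj i
    refine key j i (j+1) (i + (v (j+1) - v j)) hj (hc2 j hj i) ?_
    congr 1
    have hv : v j ≤ v (j+1) := hvmono j (j+1) (Nat.le_succ j)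
    omega
  · -- condition 3
    intro i
    refine key (d-1) i 0 (i + (e + v 0 - v (d-1))) (by omega) (hc3 i) ?_
    have hv : v (d-1) < e := hve (d-1) (by omega)
    have hA : ((v 0 : ℤ) - (((i + (e + v 0 - v (d-1)) : ℕ) : ℤ) + 1)) =
        ((v (d-1) : ℤ) - ((i : ℤ) + 1)) - (e : ℤ) := by omega
    rw [hA]
    push_cast
    simp [ZMod.natCast_self]
  · -- condition 4
    intro m hm
    obtain ⟨ρ, hρ⟩ := hc4 m hm
    by_cases hmT : T < m
    · refine ⟨if ρ = k - 1 then k else ρ, ?_⟩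
      intro c hcd r hpr
      by_cases hδ : Removable part c r ∧ bres e v part c r = k ∧ T < part c r
      · have hp1 : 0 < part c r := hδ.1.1
        have hp : part c r = m + 1 := by
          have h4 := hpart' c r
          rw [if_pos hδ] at h4
          omega
        have h2 := hδ.2.1
        simp only [bres] at h2
        have h1' : ((part c r : ℕ) : ZMod e) = (m : ZMod e) + 1 := by
          rw [hp]; push_cast; ring
        have hE : (((m : ℤ) - ((r : ℤ) + 1) + (v c : ℤ) : ℤ) : ZMod e) = k - 1 := by
          push_cast
          push_cast at h2
          linear_combination h2 - h1'
        rw [hE]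
        split
        · exact hone
        · next hne => exact fun h => hne h.symm
      · have hp : part c r = m := by
          have h4 := hpart' c r
          rw [if_neg hδ] at h4
          omega
        have hρ' := hρ c hcd r hp
        split
        · next hq =>
          intro hEk
          have hbk : bres e v part c r = k := by
            simp only [bres, hp]; exact hEk
          have hrem := hforce c r hcd hbk (by omega)
          exact hδ ⟨hrem, hbk, by omega⟩
        · next hq => exact hρ'
    · refine ⟨ρ, ?_⟩
      intro c hcd r hpr
      by_cases hδ : Removable part c r ∧ bres e v part c r = k ∧ T < part c r
      · have hp1 : 0 < part c r := hδ.1.1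
        have hp : part c r = m + 1 := by
          have h4 := hpart' c r
          rw [if_pos hδ] at h4
          omega
        have hmeq : m = T := by
          have := hδ.2.2
          omega
        rcases hTatt with h0 | ⟨c1, r1, hc1, hp1', hres1, hT1⟩
        · omega
        · have hp1m : part c1 r1 = m := by omega
          have hρ1 := hρ c1 hc1 r1 hp1m
          have hb1 : (((m : ℤ) - ((r1 : ℤ) + 1) + (v c1 : ℤ) : ℤ) : ZMod e) =
              bres e v part c1 r1 := by
            simp only [bres, hp1m]
          rw [hb1, hres1] at hρ1
          -- hρ1 : k - 1 ≠ ρ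
          have h2 := hδ.2.1
          simp only [bres] at h2
          have h1' : ((part c r : ℕ) : ZMod e) = (m : ZMod e) + 1 := by
            rw [hp]; push_cast; ring
          have hE : (((m : ℤ) - ((r : ℤ) + 1) + (v c : ℤ) : ℤ) : ZMod e) = k - 1 := by
            push_cast
            push_cast at h2
            linear_combination h2 - h1'
          rw [hE]
          exact hρ1
      · have hp : part c r = m := by
          have h4 := hpart' c r
          rw [if_neg hδ] at h4
          omega
        exact hρ c hcd r hp
  · -- rank strictly decreases
    refine Finset.sum_lt_sum (fun c _ => Finset.sum_le_sum (fun r _ => hle c r))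
      ⟨c0, Finset.mem_range.mpr hc0, ?_⟩
    refine Finset.sum_lt_sum (fun r _ => hle c0 r) ⟨r0, Finset.mem_range.mpr hr0N, ?_⟩
    have hp1 : 0 < part c0 r0 := h0rem.1
    rw [hpart' c0 r0, if_pos ⟨h0rem, h0res, by omega⟩]
    omega
end

section
/- Within the recursive definition of the a-sequence of a FLOTW d-partition, consecutive blocks have distinct residues: if a-sequence(λ) = a-sequence(λ'), k,...,k (u times) and a-sequence(λ') = a-sequence(λ''), k',...,k' (u' times), then k ≠ k'. -/
open scoped Classical in
/-- One step of the recursive construction of the `a`-sequence: `k` is the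
residue of a removable node on a part of maximal length with no `(k−1)`-node
on the border of a part of maximal length, `T` is the largest part carrying a
border `(k−1)`-node (`0` if none), and `part'` is obtained from `part` by
removing all removable `k`-nodes on parts of length `> T`. -/
def AStep (d e : ℕ) (v : ℕ → ℕ) (part part' : ℕ → ℕ → ℕ) (k : ZMod e) : Prop :=
  ∃ lmax T c0 r0,
    0 < lmax ∧ (∀ c, c < d → part c 0 ≤ lmax) ∧
    c0 < d ∧ part c0 r0 = lmax ∧ Removable part c0 r0 ∧ bres e v part c0 r0 = k ∧
    (∀ c r, c < d → part c r = lmax → bres e v part c r ≠ k - 1) ∧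
    (∀ c r, c < d → 0 < part c r → bres e v part c r = k - 1 → part c r ≤ T) ∧
    (T = 0 ∨ ∃ c r, c < d ∧ 0 < part c r ∧ bres e v part c r = k - 1 ∧
        part c r = T) ∧
    ∀ c r, part' c r = part c r -
      (if Removable part c r ∧ bres e v part c r = k ∧ T < part c r then 1 else 0)

lemma bres_eq_of_eq (e : ℕ) (v : ℕ → ℕ) {part part' : ℕ → ℕ → ℕ} (c r : ℕ)
    (h : part' c r = part c r) : bres e v part' c r = bres e v part c r := by
  unfold bres; rw [h]

lemma bres_pred (e : ℕ) (v : ℕ → ℕ) {part part' : ℕ → ℕ → ℕ} (c r : ℕ)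
    (h : part' c r = part c r - 1) (hp : 0 < part c r) :
    bres e v part' c r = bres e v part c r - 1 := by
  unfold bres
  rw [h]
  have h2 : ((part c r - 1 : ℕ) : ℤ) = (part c r : ℤ) - 1 := by omega
  rw [h2]
  push_cast
  ring

lemma bres_row_succ (e : ℕ) (v : ℕ → ℕ) (part : ℕ → ℕ → ℕ) (c r : ℕ)
    (h : part c (r + 1) = part c r) :
    bres e v part c (r + 1) = bres e v part c r - 1 := by
  unfold bres
  rw [h]
  push_cast
  ring

/-- in the recursive definition of the `a`-sequence of a FLOTW
`d`-partition, two consecutive blocks have distinct residues: if one step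
removes `k`-nodes from `λ` giving `λ'` and the next step removes `k'`-nodes
from `λ'`, then `k ≠ k'`. -/
theorem stmt7 (d e : ℕ) (hd : 0 < d) (he : 0 < e)
    (v : ℕ → ℕ) (hvmono : ∀ i j, i ≤ j → v i ≤ v j) (hve : ∀ i, i < d → v i < e)
    (part part' part'' : ℕ → ℕ → ℕ)
    (hflotw : IsFLOTW d e v part)
    (hfin : ∃ N, ∀ c r, N ≤ r → part c r = 0)
    (k k' : ZMod e)
    (h1 : AStep d e v part part' k)
    (h2 : AStep d e v part' part'' k') :
    k ≠ k' := by
  intro heq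
  subst heq
  obtain ⟨lmax, T, c0, r0, hlm, hmax, hc0, hr0, hrem, hbr, hnok1, hborder, hTspec, hupd⟩ := h1
  obtain ⟨lmax', T', c0', r0', hlm', hmax', hc0', hr0', hrem', hbr', hnok1', _, _, _⟩ := h2
  -- e ≠ 1
  have he1 : e ≠ 1 := by
    intro h
    subst h
    obtain ⟨ρ, hρ⟩ := hflotw.2.2.2 lmax hlm
    exact hρ c0 hc0 r0 hr0 (Subsingleton.elim _ _)
  have hone : (1 : ZMod e) ≠ 0 := by
    haveI : NeZero e := ⟨he.ne'⟩
    intro h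
    have : e ∣ 1 := by
      rwa [← Nat.cast_one, ZMod.natCast_eq_zero_iff] at h
    exact he1 (Nat.dvd_one.mp this)
  have hk1 : k - 1 ≠ k := fun h => hone (sub_eq_self.mp h)
  classical
  by_cases hP : Removable part c0' r0' ∧ bres e v part c0' r0' = k ∧ T < part c0' r0'
  · -- Case B : the node was removed, so its residue in part' is k - 1 ≠ k
    have hval : part' c0' r0' = part c0' r0' - 1 := by
      rw [hupd c0' r0', if_pos hP]
    have hbp : bres e v part' c0' r0' = bres e v part c0' r0' - 1 :=
      bres_pred e v c0' r0' hval hP.1.1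
    rw [hbr', hP.2.1] at hbp
    exact hk1 hbp.symm
  · -- Case A : the node was unchanged
    have hval : part' c0' r0' = part c0' r0' := by
      rw [hupd c0' r0', if_neg hP, Nat.sub_zero]
    have hbp : bres e v part c0' r0' = k := by
      rw [← bres_eq_of_eq e v c0' r0' hval]; exact hbr'
    have hpos : 0 < part c0' r0' := by rw [← hval, hr0']; exact hlm'
    -- removability of (c0', r0') in part
    have hremA : Removable part c0' r0' := by
      refine ⟨hpos, ?_⟩
      by_cases hQ : Removable part c0' (r0' + 1) ∧
          bres e v part c0' (r0' + 1) = k ∧ T < part c0' (r0' + 1)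
      · -- the node below was removed
        have hv1 : part' c0' (r0' + 1) = part c0' (r0' + 1) - 1 := by
          rw [hupd c0' (r0' + 1), if_pos hQ]
        have hle : part c0' (r0' + 1) ≤ part c0' r0' :=
          hflotw.1 c0' r0' (r0' + 1) (Nat.le_succ r0')
        rcases lt_or_eq_of_le hle with h | h
        · exact h
        · exfalso
          have : bres e v part c0' (r0' + 1) = bres e v part c0' r0' - 1 :=
            bres_row_succ e v part c0' r0' h
          rw [hQ.2.1, hbp] at this
          exact hk1 this.symm
      · have hv1 : part' c0' (r0' + 1) = part c0' (r0' + 1) := by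
          rw [hupd c0' (r0' + 1), if_neg hQ, Nat.sub_zero]
        have := hrem'.2
        rw [hv1, hval] at this
        exact this
    -- since the node was not removed, part c0' r0' ≤ T
    have hT : part c0' r0' ≤ T := by
      by_contra hTlt
      exact hP ⟨hremA, hbp, Nat.lt_of_not_le hTlt⟩
    have hTpos : 0 < T := lt_of_lt_of_le hpos hT
    rcases hTspec with hT0 | ⟨c1, r1, hc1, hpos1, hbr1, hT1⟩
    · omega
    -- the node (c1, r1) is unchanged in part' since its residue is k - 1 ≠ k
    have hnotrem1 : ¬(Removable part c1 r1 ∧ bres e v part c1 r1 = k ∧ T < part c1 r1) := by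
      rintro ⟨-, hk, -⟩
      exact hk1 (hbr1 ▸ hk)
    have hv1 : part' c1 r1 = part c1 r1 := by
      rw [hupd c1 r1, if_neg hnotrem1, Nat.sub_zero]
    -- part' c1 0 ≥ T
    have hc10 : T ≤ part' c1 0 := by
      by_cases hR : Removable part c1 0 ∧ bres e v part c1 0 = k ∧ T < part c1 0
      · have : part' c1 0 = part c1 0 - 1 := by rw [hupd c1 0, if_pos hR]
        omega
      · have hv0 : part' c1 0 = part c1 0 := by rw [hupd c1 0, if_neg hR, Nat.sub_zero]
        have := hflotw.1 c1 0 r1 (Nat.zero_le r1)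
        omega
    have hle1 : part' c1 0 ≤ lmax' := hmax' c1 hc1
    have hle2 : lmax' ≤ T := by
      have : part' c0' r0' ≤ T := by omega
      omega
    have hmaxeq : part' c1 r1 = lmax' := by omega
    have hbr1' : bres e v part' c1 r1 = k - 1 := by
      rw [bres_eq_of_eq e v c1 r1 hv1]; exact hbr1
    exact hnok1' c1 r1 hc1 hmaxeq hbr1'
end

section
/- Suppose λ is a d-partition and μ, μ' are d-compositions obtained from λ by adding a node of residue k at positions (j,p) and (j',p') respectively, both optimal in the sense that the added node maximizes λ^(q)_i − i + m^(q) among all addable k-positions. Then (j,p) = (j',p') and μ = μ'; i.e., the k-optimal addition to a d-partition is unique. -/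
/-- uniqueness of the `k`-optimal node addition to a
`d`-partition. If `μ`, `μ'` are obtained from the `d`-partition `λ` by adding
a node of residue `k` at addable positions `(j,p)` resp. `(j',p')` (here
`(c,r)` resp. `(c',r')`, with rows indexed from `0`), both maximizing
`λ^(q)_i − i + m^(q)` among addable `k`-positions, then the positions — and
hence `μ` and `μ'` — coincide. -/
theorem stmt8 (d e e' s : ℕ) (hd : 0 < d) (he : 0 < e) (hee : e = d * e')
    (v : ℕ → ℕ) (hvmono : ∀ i j, i ≤ j → v i ≤ v j) (hve : ∀ i, i < d → v i < e)
    (m : ℕ → ℤ) (hm : ∀ j, m j = (v j : ℤ) - (j : ℤ) * (e' : ℤ) + (s : ℤ) * (e : ℤ))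
    (part : ℕ → ℕ → ℕ) (hmono : ∀ c, ∀ j k, j ≤ k → part c k ≤ part c j)
    (k : ZMod e) (c r c' r' : ℕ) (hc : c < d) (hc' : c' < d)
    (hadd : r = 0 ∨ part c r < part c (r - 1))
    (hadd' : r' = 0 ∨ part c' r' < part c' (r' - 1))
    (hres : (((part c r : ℤ) + 1 - ((r : ℤ) + 1) + (v c : ℤ) : ℤ) : ZMod e) = k)
    (hres' : (((part c' r' : ℤ) + 1 - ((r' : ℤ) + 1) + (v c' : ℤ) : ℤ) : ZMod e) = k)
    (hopt : (part c' r' : ℤ) - ((r' : ℤ) + 1) + m c' ≤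
      (part c r : ℤ) - ((r : ℤ) + 1) + m c)
    (hopt' : (part c r : ℤ) - ((r : ℤ) + 1) + m c ≤
      (part c' r' : ℤ) - ((r' : ℤ) + 1) + m c') :
    c = c' ∧ r = r' ∧
      (fun c₁ r₁ => if c₁ = c ∧ r₁ = r then part c r + 1 else part c₁ r₁)
        = (fun c₁ r₁ => if c₁ = c' ∧ r₁ = r' then part c' r' + 1 else part c₁ r₁) := by

  have he' : 0 < e' := by
    rcases Nat.eq_zero_or_pos e' with h | h
    · subst h; simp at hee; omega
    · exact h
  have heq : (part c r : ℤ) - ((r : ℤ) + 1) + m c =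
      (part c' r' : ℤ) - ((r' : ℤ) + 1) + m c' := le_antisymm hopt' hopt
  rw [hm c, hm c'] at heq
  have hmod := (ZMod.intCast_eq_intCast_iff _ _ _).mp (hres.trans hres'.symm)
  have hdvd : (e : ℤ) ∣
      (((part c' r' : ℤ) + 1 - ((r' : ℤ) + 1) + (v c' : ℤ)) -
        ((part c r : ℤ) + 1 - ((r : ℤ) + 1) + (v c : ℤ))) := hmod.dvd
  have hX : ((part c' r' : ℤ) + 1 - ((r' : ℤ) + 1) + (v c' : ℤ)) -
      ((part c r : ℤ) + 1 - ((r : ℤ) + 1) + (v c : ℤ)) = ((c' : ℤ) - c) * e' := by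
    linarith [heq]
  rw [hX, hee] at hdvd
  push_cast at hdvd
  have hde' : ((e' : ℤ)) ≠ 0 := by positivity
  have hdvd2 : (d : ℤ) ∣ ((c' : ℤ) - c) := by
    rcases hdvd with ⟨t, ht⟩
    exact ⟨t, by
      have : ((c' : ℤ) - c) * e' = (d : ℤ) * t * e' := by linarith [ht]
      exact mul_right_cancel₀ hde' this⟩
  have hcc : c = c' := by
    have h0 : ((c' : ℤ) - c) = 0 := by
      refine Int.eq_zero_of_dvd_of_natAbs_lt_natAbs hdvd2 ?_
      simp only [Int.natAbs_natCast]
      omega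
    omega
  subst hcc
  have hXX : (part c r : ℤ) - (r : ℤ) = (part c r' : ℤ) - (r' : ℤ) := by linarith [heq]
  have hrr : r = r' := by
    rcases le_total r r' with h | h
    · have := hmono c r r' h; omega
    · have := hmono c r' r h; omega
  subst hrr
  exact ⟨rfl, rfl, rfl⟩
end

section
/- Let λ be a d-composition, B an ordinary symbol of λ, and β_1 < β_2 two entries of the shifted symbol B[m]'. Form μ by adding l nodes to the part corresponding to β_1 and ν by adding l nodes to the part corresponding to β_2. Then ν ≺ μ, where ≺ compares the symbol-statistic S(·) = Σ_{0≤i≤j<d, (a,b)∈B'^(i)×B'^(j), a>b if i=j} min{a,b} − Σ_{0≤i,j<d, a∈B'^(i), 1≤t≤a} min{t, m^(j)} computed on symbols of equal height. In particular, if μ and ν are d-partitions then a(μ) > a(ν). -/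
/-!
Write the shifted symbol as a function `β` on the positions `(i, j)`, ordered lexicographically.
Then `S = Σ_{p < q} min (β p) (β q) - Σ_p Σ_{1 ≤ t ≤ ⌊β p⌋} f t` with the nondecreasing weight
`f t = Σ_j min t m⁽ʲ⁾`. Raising one entry `a = β p₀ ≥ 0` by `l` changes the first sum by
`Σ_q (min (a + l) (β q) - min a (β q))`, which is antitone in `a`, and the second by
`f (⌊a⌋ + 1) + ⋯ + f (⌊a⌋ + l)`, which is monotone in `a`. Hence raising the smaller entry
`β₁` increases `S` at least as much as raising `β₂`, and strictly more because of the term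
`q = p₂`: it contributes `min (β₁ + l) β₂ - β₁ > 0` in the first case and `0` in the second.
-/

open Finset

/-- The shifted symbol entry `B'^(i)_j = λ^(i)_j − (j+1) + h + m^(i)`
(rows indexed from `0`) of a `d`-composition, for a symbol of height `h`. -/
noncomputable def symb (h : ℕ) (m : ℕ → ℚ) (part : ℕ → ℕ → ℕ) (i j : ℕ) : ℚ :=
  (part i j : ℚ) - ((j : ℚ) + 1) + (h : ℚ) + m i

/-- The symbol statistic
`S(λ) = Σ_{i≤j, (a,b)∈B'^(i)×B'^(j), a>b if i=j} min{a,b}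
      − Σ_{i,j, a∈B'^(i), 1≤t≤a} min{t, m^(j)}`
computed on (shifted) symbols of height `h`. -/
noncomputable def Sstat (d h : ℕ) (m : ℕ → ℚ) (part : ℕ → ℕ → ℕ) : ℚ :=
  (∑ i ∈ range d, ∑ j ∈ range d, ∑ r ∈ range h, ∑ s ∈ range h,
    if i < j ∨ (i = j ∧ r < s)
      then min (symb h m part i r) (symb h m part j s) else 0)
  - ∑ i ∈ range d, ∑ j ∈ range d, ∑ r ∈ range h,
      ∑ t ∈ Finset.Icc 1 (Int.toNat ⌊symb h m part i r⌋), min (t : ℚ) (m j)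

open Function

lemma sum_Icc_one_add_right {M : Type*} [AddCommMonoid M] (f : ℕ → M) (n l : ℕ) :
    ∑ t ∈ Icc 1 (n + l), f t = ∑ t ∈ Icc 1 n, f t + ∑ i ∈ range l, f (n + 1 + i) := by
  induction l with
  | zero => simp
  | succ l ih =>
    rw [← add_assoc, sum_Icc_succ_top (by omega), ih, sum_range_succ, add_assoc,
      Nat.add_right_comm n 1 l]

lemma min_add_sub_min_antitone {a b δ : ℚ} (x : ℚ) (hab : a ≤ b) (hδ : 0 ≤ δ) :
    min (b + δ) x - min b x ≤ min (a + δ) x - min a x := by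
  simp only [min_def]; split_ifs <;> linarith

section SymbolStatistic

variable {ι : Type*} [DecidableEq ι] (r : ι → ι → Prop) [DecidableRel r]

def pairMinSum (s : Finset ι) (β : ι → ℚ) : ℚ :=
  ∑ p ∈ s, ∑ q ∈ s, if r p q then min (β p) (β q) else 0

def symbolStat (s : Finset ι) (f : ℕ → ℚ) (β : ι → ℚ) : ℚ :=
  pairMinSum r s β - ∑ p ∈ s, ∑ t ∈ Icc 1 ⌊β p⌋₊, f t

variable [Std.Trichotomous r] [Std.Asymm r]

lemma sum_ite_rel_add_ite_rel_swap (s : Finset ι) (p₀ : ι) (φ : ι → ℚ) :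
    ∑ q ∈ s, ((if r p₀ q then φ q else 0) + if r q p₀ then φ q else 0) =
      ∑ q ∈ s.erase p₀, φ q := by
  rw [← filter_ne', sum_filter]
  refine sum_congr rfl fun q _ => ?_
  rcases trichotomous_of r p₀ q with hq | rfl | hq
  · simp [hq, Std.Asymm.asymm _ _ hq, (ne_of_irrefl hq).symm]
  · simp [irrefl]
  · simp [hq, Std.Asymm.asymm _ _ hq, ne_of_irrefl hq]

lemma pairMinSum_update_add {s : Finset ι} {p₀ : ι} (h₀ : p₀ ∈ s) (β : ι → ℚ) {δ : ℚ}
    (hδ : 0 ≤ δ) :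
    pairMinSum r s (update β p₀ (β p₀ + δ)) =
      pairMinSum r s β + ∑ q ∈ s, (min (β p₀ + δ) (β q) - min (β p₀) (β q)) := by
  set φ : ι → ℚ := fun q => min (β p₀ + δ) (β q) - min (β p₀) (β q)
  have hφ₀ : φ p₀ = 0 := by simp [φ, hδ]
  -- only the row and the column of `p₀` change
  have hterm : ∀ p q,
      (if r p q then min (update β p₀ (β p₀ + δ) p) (update β p₀ (β p₀ + δ) q) else 0) =
        (if r p q then min (β p) (β q) else 0) +
          ((if p = p₀ then (if r p₀ q then φ q else 0) else 0) +
            if q = p₀ then (if r p p₀ then φ p else 0) else 0) := by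
    intro p q
    by_cases hp : p = p₀ <;> by_cases hq : q = p₀
    · subst hp hq; simp [irrefl]
    · subst hp; split_ifs <;> simp_all [φ]
    · subst hq; split_ifs <;> simp_all [φ, min_comm]
    · simp [hp, hq]
  unfold pairMinSum
  simp only [hterm, sum_add_distrib, sum_ite_irrel, sum_const_zero, sum_ite_eq', h₀, if_true]
  rw [← sum_add_distrib, sum_ite_rel_add_ite_rel_swap, sum_erase s hφ₀]

lemma sum_floor_update_add (s : Finset ι) (f : ℕ → ℚ) {p₀ : ι} (h₀ : p₀ ∈ s) {β : ι → ℚ}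
    (hβ : 0 ≤ β p₀) (l : ℕ) :
    ∑ p ∈ s, ∑ t ∈ Icc 1 ⌊update β p₀ (β p₀ + l) p⌋₊, f t =
      ∑ p ∈ s, ∑ t ∈ Icc 1 ⌊β p⌋₊, f t + ∑ i ∈ range l, f (⌊β p₀⌋₊ + 1 + i) := by
  rw [← add_sum_erase _ _ h₀, ← add_sum_erase _ _ h₀, update_self, Nat.floor_add_natCast hβ,
    sum_Icc_one_add_right]
  have hrest : ∀ p ∈ s.erase p₀, update β p₀ (β p₀ + l) p = β p :=
    fun p hp => update_of_ne (ne_of_mem_erase hp) _ _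
  rw [sum_congr rfl fun p hp => congrArg (fun x => ∑ t ∈ Icc 1 ⌊x⌋₊, f t) (hrest p hp)]
  ring

lemma symbolStat_update_add {s : Finset ι} (f : ℕ → ℚ) {p₀ : ι} (h₀ : p₀ ∈ s) {β : ι → ℚ}
    (hβ : 0 ≤ β p₀) (l : ℕ) :
    symbolStat r s f (update β p₀ (β p₀ + l)) =
      symbolStat r s f β + ∑ q ∈ s, (min (β p₀ + l) (β q) - min (β p₀) (β q)) -
        ∑ i ∈ range l, f (⌊β p₀⌋₊ + 1 + i) := by
  rw [symbolStat, symbolStat, pairMinSum_update_add r h₀ β (Nat.cast_nonneg l),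
    sum_floor_update_add s f h₀ hβ]
  ring

theorem symbolStat_update_lt {s : Finset ι} {f : ℕ → ℚ} (hf : Monotone f) {β : ι → ℚ}
    {p₁ p₂ : ι} (h₁ : p₁ ∈ s) (h₂ : p₂ ∈ s) (hβ : 0 ≤ β p₁) (hlt : β p₁ < β p₂) {l : ℕ}
    (hl : 0 < l) :
    symbolStat r s f (update β p₂ (β p₂ + l)) < symbolStat r s f (update β p₁ (β p₁ + l)) := by
  have hl' : (0 : ℚ) < l := Nat.cast_pos.mpr hl
  rw [symbolStat_update_add r f h₁ hβ, symbolStat_update_add r f h₂ (hβ.trans hlt.le)]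
  have hgain : ∑ q ∈ s, (min (β p₂ + l) (β q) - min (β p₂) (β q)) <
      ∑ q ∈ s, (min (β p₁ + l) (β q) - min (β p₁) (β q)) := by
    refine sum_lt_sum (fun q _ => min_add_sub_min_antitone _ hlt.le hl'.le) ⟨p₂, h₂, ?_⟩
    rw [min_eq_right (by linarith), min_self, sub_self, min_eq_left hlt.le]
    exact sub_pos.mpr (lt_min (by linarith) hlt)
  have hcost : ∑ i ∈ range l, f (⌊β p₁⌋₊ + 1 + i) ≤ ∑ i ∈ range l, f (⌊β p₂⌋₊ + 1 + i) :=
    sum_le_sum fun i _ => hf (by gcongr)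
  linarith

end SymbolStatistic

noncomputable def shiftedSymbol (h : ℕ) (m : ℕ → ℚ) (part : ℕ → ℕ → ℕ) (p : ℕ × ℕ) : ℚ :=
  symb h m part p.1 p.2

def addNodes (part : ℕ → ℕ → ℕ) (i j l : ℕ) : ℕ → ℕ → ℕ :=
  fun c r => if c = i ∧ r = j then part c r + l else part c r

lemma shiftedSymbol_addNodes (h : ℕ) (m : ℕ → ℚ) (part : ℕ → ℕ → ℕ) (i j l : ℕ) :
    shiftedSymbol h m (addNodes part i j l) =
      update (shiftedSymbol h m part) (i, j) (shiftedSymbol h m part (i, j) + l) := by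
  funext ⟨c, r⟩
  by_cases hcr : (c, r) = (i, j)
  · obtain ⟨rfl, rfl⟩ := Prod.mk.inj hcr
    simp [shiftedSymbol, symb, addNodes]
    ring
  · rw [update_of_ne hcr]
    simp_all [shiftedSymbol, symb, addNodes]

lemma shiftedSymbol_nonneg {h : ℕ} {m : ℕ → ℚ} (hm : ∀ j, 0 ≤ m j) (part : ℕ → ℕ → ℕ) {i j : ℕ}
    (hj : j < h) : 0 ≤ shiftedSymbol h m part (i, j) := by
  have hjh : (j : ℚ) + 1 ≤ h := by exact_mod_cast hj
  have hpart : (0 : ℚ) ≤ part i j := Nat.cast_nonneg _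
  have hmi := hm i
  simp only [shiftedSymbol, symb]
  linarith

lemma Sstat_eq_symbolStat (d h : ℕ) (m : ℕ → ℚ) (part : ℕ → ℕ → ℕ) :
    Sstat d h m part = symbolStat (Prod.Lex (· < ·) (· < ·)) (range d ×ˢ range h)
      (fun t => ∑ j ∈ range d, min (t : ℚ) (m j)) (shiftedSymbol h m part) := by
  unfold Sstat symbolStat pairMinSum
  congr 1
  · simp only [sum_product, Prod.lex_def, shiftedSymbol]
    exact sum_congr rfl fun i _ => sum_comm
  · simp only [sum_product, Int.floor_toNat, shiftedSymbol]
    refine sum_congr rfl fun i _ => ?_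
    rw [sum_comm]
    exact sum_congr rfl fun r _ => sum_comm

lemma monotone_sum_min_natCast (s : Finset ℕ) (m : ℕ → ℚ) :
    Monotone fun t : ℕ => ∑ j ∈ s, min (t : ℚ) (m j) :=
  fun _ _ hab => sum_le_sum fun _ _ => min_le_min_right _ (Nat.cast_le.mpr hab)

theorem stmt10_general (d h l : ℕ) (hl : 0 < l) (m : ℕ → ℚ) (hm : ∀ j, 0 ≤ m j)
    (part : ℕ → ℕ → ℕ)
    (i₁ j₁ i₂ j₂ : ℕ) (hi₁ : i₁ < d) (hi₂ : i₂ < d) (hj₁ : j₁ < h) (hj₂ : j₂ < h)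
    (hlt : symb h m part i₁ j₁ < symb h m part i₂ j₂)
    (μ ν : ℕ → ℕ → ℕ)
    (hμ : μ = fun c r => if c = i₁ ∧ r = j₁ then part c r + l else part c r)
    (hν : ν = fun c r => if c = i₂ ∧ r = j₂ then part c r + l else part c r) :
    Sstat d h m ν < Sstat d h m μ := by
  obtain rfl : μ = addNodes part i₁ j₁ l := hμ
  obtain rfl : ν = addNodes part i₂ j₂ l := hν
  rw [Sstat_eq_symbolStat, Sstat_eq_symbolStat, shiftedSymbol_addNodes, shiftedSymbol_addNodes]
  exact symbolStat_update_lt _ (monotone_sum_min_natCast _ m) (p₁ := (i₁, j₁)) (p₂ := (i₂, j₂))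
    (mem_product.mpr ⟨mem_range.mpr hi₁, mem_range.mpr hj₁⟩)
    (mem_product.mpr ⟨mem_range.mpr hi₂, mem_range.mpr hj₂⟩)
    (shiftedSymbol_nonneg hm part hj₁) hlt hl

/-- let `λ` be a `d`-composition with symbol of height `h`, and
`β₁ < β₂` two entries of the shifted symbol `B[m]'`, at positions `(i₁,j₁)`
and `(i₂,j₂)`.  Adding `l ≥ 1` nodes to the part of `β₁` gives `μ`; adding
`l` nodes to the part of `β₂` gives `ν`.  Then `ν ≺ μ`, i.e.
`S(ν) < S(μ)`; in particular, since the `a`-function differs from `S` by a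
quantity depending only on `(n,h,m)`, if `μ` and `ν` are `d`-partitions then
`a(ν) < a(μ)`. -/
theorem stmt10 (d h l : ℕ) (hl : 0 < l) (m : ℕ → ℚ) (hm : ∀ j, 0 ≤ m j)
    (part : ℕ → ℕ → ℕ) (hht : ∀ c r, h ≤ r → part c r = 0)
    (i₁ j₁ i₂ j₂ : ℕ) (hi₁ : i₁ < d) (hi₂ : i₂ < d) (hj₁ : j₁ < h) (hj₂ : j₂ < h)
    (hne : (i₁, j₁) ≠ (i₂, j₂))
    (hlt : symb h m part i₁ j₁ < symb h m part i₂ j₂)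
    (μ ν : ℕ → ℕ → ℕ)
    (hμ : μ = fun c r => if c = i₁ ∧ r = j₁ then part c r + l else part c r)
    (hν : ν = fun c r => if c = i₂ ∧ r = j₂ then part c r + l else part c r) :
    Sstat d h m ν < Sstat d h m μ :=
  stmt10_general d h l hl m hm part i₁ j₁ i₂ j₂ hi₁ hi₂ hj₁ hj₂ hlt μ ν hμ hν
end

section
/- Let λ be a FLOTW d-partition and let γ = (a,b,c), γ' = (a',b',c') be two nodes of λ with the same residue modulo e. Then b − a + m^(c) > b' − a' + m^(c') if and only if γ is below γ' in the FLOTW order. -/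
lemma stmt12_key (D E E' X Y K C C' : ℤ) (hE : 0 < E) (hE' : 0 < E')
    (hEq : E = D * E') (hK : X - Y = E * K) (hC0 : 0 ≤ C) (hC0' : 0 ≤ C')
    (hCd : C ≤ D - 1) (hCd' : C' ≤ D - 1) :
    X - Y > (C - C') * E' ↔ (X > Y ∨ (X = Y ∧ C < C')) := by
  constructor
  · intro h1
    rcases lt_trichotomy K 0 with hk0 | hk0 | hk0
    · exfalso
      have h2 : X - Y ≤ -E := by rw [hK]; nlinarith
      have h3 : (1 - D) * E' ≤ (C - C') * E' := by
        apply mul_le_mul_of_nonneg_right _ (le_of_lt hE'); linarith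
      nlinarith
    · right
      have hXY : X - Y = 0 := by rw [hK, hk0, mul_zero]
      refine ⟨by linarith, ?_⟩
      rw [hXY] at h1; nlinarith
    · left
      have h2 : E ≤ X - Y := by rw [hK]; nlinarith
      linarith
  · rintro (hlt | ⟨hXY, hCC⟩)
    · have hk1 : 1 ≤ K := by nlinarith
      have h2 : E ≤ X - Y := by rw [hK]; nlinarith
      have h3 : (C - C') * E' ≤ (D - 1) * E' := by
        apply mul_le_mul_of_nonneg_right _ (le_of_lt hE'); linarith
      nlinarith
    · have : X - Y = 0 := by linarith
      rw [this]; nlinarith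

/-- let `λ` be a FLOTW `d`-partition and `γ = (a,b,c)`,
`γ' = (a',b',c')` two nodes of `λ` (rows `a, a'` indexed from `1`) with the
same residue mod `e`.  Then `b − a + m^(c) > b' − a' + m^(c')` iff `γ` is
below `γ'` in the FLOTW order, i.e. iff `b − a + v_c > b' − a' + v_{c'}`, or
`b − a + v_c = b' − a' + v_{c'}` and `c < c'`. -/
theorem stmt12 (d e e' s : ℕ) (hd : 0 < d) (he : 0 < e) (hee : e = d * e')
    (v : ℕ → ℕ) (hvmono : ∀ i j, i ≤ j → v i ≤ v j) (hve : ∀ i, i < d → v i < e)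
    (m : ℕ → ℤ)
    (hm : ∀ j, m j = (v j : ℤ) - (j : ℤ) * (e' : ℤ) + (s : ℤ) * (e : ℤ))
    (hm0 : ∀ j, j < d → 0 ≤ m j)
    (part : ℕ → ℕ → ℕ) (hflotw : IsFLOTW d e v part)
    (a b c a' b' c' : ℕ) (hc : c < d) (hc' : c' < d)
    (ha : 1 ≤ a) (ha' : 1 ≤ a')
    (hb : 1 ≤ b) (hbe : b ≤ part c (a - 1))
    (hb' : 1 ≤ b') (hbe' : b' ≤ part c' (a' - 1))
    (hres : (((b : ℤ) - (a : ℤ) + (v c : ℤ) : ℤ) : ZMod e)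
        = (((b' : ℤ) - (a' : ℤ) + (v c' : ℤ) : ℤ) : ZMod e)) :
    (b : ℤ) - (a : ℤ) + m c > (b' : ℤ) - (a' : ℤ) + m c' ↔
      ((b : ℤ) - (a : ℤ) + (v c : ℤ) > (b' : ℤ) - (a' : ℤ) + (v c' : ℤ) ∨
        ((b : ℤ) - (a : ℤ) + (v c : ℤ) = (b' : ℤ) - (a' : ℤ) + (v c' : ℤ) ∧
          c < c')) := by
  have he' : 0 < e' := by
    rcases Nat.eq_zero_or_pos e' with h | h
    · subst h; simp at hee; omega
    · exact h
  set X : ℤ := (b : ℤ) - (a : ℤ) + (v c : ℤ) with hX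
  set Y : ℤ := (b' : ℤ) - (a' : ℤ) + (v c' : ℤ) with hY
  have hdvd : (e : ℤ) ∣ X - Y := by
    have := (ZMod.intCast_eq_intCast_iff' X Y e).mp hres
    exact Int.ModEq.dvd this.symm
  obtain ⟨k, hk⟩ := hdvd
  have hiff : ((b : ℤ) - (a : ℤ) + m c > (b' : ℤ) - (a' : ℤ) + m c') ↔
      X - Y > ((c : ℤ) - (c' : ℤ)) * (e' : ℤ) := by
    rw [hm c, hm c', hX, hY]
    constructor <;> intro h <;> linarith
  have hkey := stmt12_key (d : ℤ) (e : ℤ) (e' : ℤ) X Y k (c : ℤ) (c' : ℤ)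
    (by exact_mod_cast he) (by exact_mod_cast he') (by exact_mod_cast hee) hk
    (Int.natCast_nonneg _) (Int.natCast_nonneg _) (by omega) (by omega)
  rw [hiff, hkey]
  constructor <;> rintro (h | ⟨h1, h2⟩)
  · left; exact h
  · right; exact ⟨h1, by exact_mod_cast h2⟩
  · left; exact h
  · right; exact ⟨h1, by exact_mod_cast h2⟩
end

section
/- For Hecke algebras of type B_n with equal parameters specialized at an odd primitive e-th root of unity, the a-function is compatible with the dominance-order factorization of Dipper–James: if λ = (λ^(0), λ^(1)) and μ = (μ^(0), μ^(1)) are 2-partitions of n with |μ^(0)| = |λ^(0)|, |μ^(1)| = |λ^(1)|, μ^(0) ⊴ λ^(0) and μ^(1) ⊴ λ^(1), then a(λ^(0),λ^(1)) ≤ a(λ^(0),μ^(1)) ≤ a(μ^(0),μ^(1)). -/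
open Finset

/-- The `a`-function for the one-parameter Hecke algebra of type `B_n`:
for a `2`-partition `(λ^(0), λ^(1))` (parts indexed from `0`, so
`f i = λ^(0)_{i+1}`, `g i = λ^(1)_{i+1}`) and `r` at least both heights,
`a(λ^(0),λ^(1)) = −(1/6) r(r−1)(2r+5) + Σ_{i=1}^r (i−1)(λ^(0)_i+λ^(1)_i+1)
 + Σ_{i,j=1}^r min{λ^(0)_i+1+r−i, λ^(1)_j+r−j}`. -/
noncomputable def aB (r : ℕ) (f g : ℕ → ℕ) : ℚ :=
  -(1 / 6 : ℚ) * r * ((r : ℚ) - 1) * (2 * r + 5)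
    + ∑ i ∈ range r, (i : ℚ) * ((f i : ℚ) + (g i : ℚ) + 1)
    + ∑ i ∈ range r, ∑ j ∈ range r,
        min ((f i : ℚ) + 1 + (r : ℚ) - ((i : ℚ) + 1))
            ((g j : ℚ) + (r : ℚ) - ((j : ℚ) + 1))

/-- Dominance order on partitions (of equal rank): `μ ⊴ λ`. -/
def Dominates (r : ℕ) (lam mu : ℕ → ℕ) : Prop :=
  ∀ i, i ≤ r → ∑ j ∈ range i, mu j ≤ ∑ j ∈ range i, lam j

/-- indicator count -/
def cnt (r : ℕ) (u : ℕ → ℕ) (t : ℕ) : ℕ := ∑ i ∈ range r, if t < u i then 1 else 0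

lemma ind_sum (a T : ℕ) : ∑ t ∈ range T, (if t < a then (1:ℕ) else 0) = min a T := by
  induction T with
  | zero => simp
  | succ T ih =>
    rw [Finset.sum_range_succ, ih]
    split_ifs with h <;> omega

lemma ind_pair (a b T : ℕ) :
    ∑ t ∈ range T, (if t < a then (1:ℕ) else 0) * (if t < b then 1 else 0)
      = min (min a b) T := by
  have h : ∀ t, (if t < a then (1:ℕ) else 0) * (if t < b then 1 else 0)
      = if t < min a b then 1 else 0 := by
    intro t
    simp only [Nat.lt_min]
    split_ifs <;> simp_all
  rw [Finset.sum_congr rfl (fun t _ => h t), ind_sum]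

lemma cnt_prefix (r T : ℕ) (u : ℕ → ℕ) :
    ∑ t ∈ range T, cnt r u t = ∑ j ∈ range r, min (u j) T := by
  unfold cnt
  rw [Finset.sum_comm]
  exact Finset.sum_congr rfl (fun j _ => ind_sum (u j) T)

lemma cnt_antitone (r : ℕ) (u : ℕ → ℕ) {s t : ℕ} (h : s ≤ t) :
    cnt r u t ≤ cnt r u s := by
  unfold cnt
  apply Finset.sum_le_sum
  intro i _
  split_ifs <;> omega

lemma crossId (r M : ℕ) (u v : ℕ → ℕ) (hu : ∀ i, i < r → u i ≤ M) :
    ∑ t ∈ range M, cnt r u t * cnt r v t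
      = ∑ i ∈ range r, ∑ j ∈ range r, min (u i) (v j) := by
  unfold cnt
  have h1 : ∀ t, (∑ i ∈ range r, if t < u i then (1:ℕ) else 0) *
      (∑ j ∈ range r, if t < v j then (1:ℕ) else 0)
      = ∑ i ∈ range r, ∑ j ∈ range r,
          (if t < u i then (1:ℕ) else 0) * (if t < v j then 1 else 0) := by
    intro t; rw [Finset.sum_mul_sum]
  rw [Finset.sum_congr rfl (fun t _ => h1 t), Finset.sum_comm]
  apply Finset.sum_congr rfl
  intro i hi
  rw [Finset.sum_comm]
  apply Finset.sum_congr rfl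
  intro j _
  rw [ind_pair]
  exact min_eq_left (le_trans (min_le_left _ _) (hu i (mem_range.mp hi)))

lemma maxsum : ∀ (n : ℕ) (B : ℕ → ℕ), (∀ j k, j ≤ k → k < n → B k ≤ B j) →
    ∑ j ∈ range n, ∑ k ∈ range n, min (B j) (B k) = ∑ m ∈ range n, (2*m+1) * B m := by
  intro n
  induction n with
  | zero => simp
  | succ n ih =>
    intro B h
    have hmono : ∀ j k, j ≤ k → k < n → B k ≤ B j := fun j k h1 h2 => h j k h1 (by omega)
    have h1 : ∀ j ∈ range n, ∑ k ∈ range (n+1), min (B j) (B k)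
        = (∑ k ∈ range n, min (B j) (B k)) + B n := by
      intro j hj
      rw [Finset.sum_range_succ,
        min_eq_right (h j n (Nat.le_of_lt (mem_range.mp hj)) (Nat.lt_succ_self n))]
    rw [Finset.sum_range_succ, Finset.sum_congr rfl h1, Finset.sum_add_distrib, ih B hmono]
    have h2 : ∑ k ∈ range (n+1), min (B n) (B k) = (∑ k ∈ range n, B n) + B n := by
      rw [Finset.sum_range_succ, min_self]
      congr 1
      exact Finset.sum_congr rfl
        (fun k hk => min_eq_left (h k n (Nat.le_of_lt (mem_range.mp hk)) (Nat.lt_succ_self n)))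
    rw [h2, Finset.sum_range_succ (fun m => (2*m+1) * B m)]
    simp only [Finset.sum_const, Finset.card_range, smul_eq_mul]
    ring

lemma filter_eq_range {n : ℕ} (P : ℕ → Prop) [DecidablePred P]
    (h : ∀ j k, j ≤ k → k < n → P k → P j) :
    (range n).filter P = range ((range n).filter P).card := by
  induction n with
  | zero => simp
  | succ n ih =>
    by_cases hn : P n
    · have hall : ∀ j ∈ range (n+1), P j := by
        intro j hj
        exact h j n (by have := mem_range.mp hj; omega) (Nat.lt_succ_self n) hn
      rw [Finset.filter_true_of_mem hall, Finset.card_range]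
    · rw [Finset.range_add_one, Finset.filter_insert, if_neg hn]
      exact ih (fun j k h1 h2 => h j k h1 (by omega))

lemma abel_lemma (M : ℕ) (d c : ℕ → ℤ)
    (hD : ∀ T, T ≤ M → 0 ≤ ∑ t ∈ range T, d t)
    (hc : ∀ s t, s ≤ t → c t ≤ c s) :
    (∑ t ∈ range M, d t) * c M ≤ ∑ t ∈ range M, d t * c t := by
  induction M with
  | zero => simp
  | succ M ih =>
    have ihh := ih (fun T hT => hD T (by omega))
    rw [Finset.sum_range_succ, Finset.sum_range_succ]
    have h1 : c (M+1) ≤ c M := hc M (M+1) (by omega)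
    have h2 : 0 ≤ ∑ t ∈ range (M+1), d t := hD (M+1) (le_refl _)
    rw [Finset.sum_range_succ] at h2
    nlinarith [ihh, mul_le_mul_of_nonneg_left h1 h2]

lemma prefix_le (r T : ℕ) (p p' : ℕ → ℕ)
    (hp' : ∀ j k, j ≤ k → p' k ≤ p' j)
    (hdom : ∀ k, k ≤ r → ∑ j ∈ range k, p' j ≤ ∑ j ∈ range k, p j)
    (hsum : ∑ j ∈ range r, p' j = ∑ j ∈ range r, p j) :
    ∑ j ∈ range r, min (p j + (r - 1 - j)) T
      ≤ ∑ j ∈ range r, min (p' j + (r - 1 - j)) T := by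
  set B : ℕ → ℕ := fun j => p j + (r - 1 - j) with hB
  set B' : ℕ → ℕ := fun j => p' j + (r - 1 - j) with hB'
  set k := ((range r).filter (fun j => T < B' j)).card with hk
  have hdc : ∀ j m, j ≤ m → m < r → T < B' m → T < B' j := by
    intro j m h1 h2 h3
    have := hp' j m h1
    simp only [hB'] at *
    omega
  have hfil : (range r).filter (fun j => T < B' j) = range k := filter_eq_range _ hdc
  have hkr : k ≤ r := by
    rw [hk]
    calc ((range r).filter (fun j => T < B' j)).card ≤ (range r).card :=
          Finset.card_filter_le _ _
      _ = r := Finset.card_range r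
  have hmem1 : ∀ j, j < k → T < B' j := by
    intro j hj
    have hj' : j ∈ range k := mem_range.mpr hj
    rw [← hfil] at hj'
    exact (Finset.mem_filter.mp hj').2
  have hmem2 : ∀ j, k ≤ j → j < r → B' j ≤ T := by
    intro j h1 h2
    by_contra hc
    push_neg at hc
    have : j ∈ (range r).filter (fun j => T < B' j) :=
      Finset.mem_filter.mpr ⟨mem_range.mpr h2, hc⟩
    rw [hfil, mem_range] at this
    omega
  have split : ∀ (u : ℕ → ℕ), ∑ j ∈ range r, u j
      = ∑ j ∈ range k, u j + ∑ j ∈ Ico k r, u j := by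
    intro u
    rw [range_eq_Ico, ← Finset.sum_Ico_consecutive _ (Nat.zero_le k) hkr, ← range_eq_Ico]
  rw [split (fun j => min (B j) T), split (fun j => min (B' j) T)]
  have e1 : ∑ j ∈ range k, min (B' j) T = ∑ j ∈ range k, T :=
    Finset.sum_congr rfl (fun j hj => min_eq_right (le_of_lt (hmem1 j (mem_range.mp hj))))
  have e2 : ∑ j ∈ Ico k r, min (B' j) T = ∑ j ∈ Ico k r, B' j :=
    Finset.sum_congr rfl (fun j hj =>
      min_eq_left (hmem2 j (Finset.mem_Ico.mp hj).1 (Finset.mem_Ico.mp hj).2))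
  have le1 : ∑ j ∈ range k, min (B j) T ≤ ∑ j ∈ range k, T :=
    Finset.sum_le_sum (fun j _ => min_le_right _ _)
  have le2 : ∑ j ∈ Ico k r, min (B j) T ≤ ∑ j ∈ Ico k r, B j :=
    Finset.sum_le_sum (fun j _ => min_le_left _ _)
  have tB := split B
  have tB' := split B'
  have hBsum : ∑ j ∈ range r, B j = ∑ j ∈ range r, B' j := by
    simp only [hB, hB', Finset.sum_add_distrib, hsum]
  have hBk : ∑ j ∈ range k, B' j ≤ ∑ j ∈ range k, B j := by
    simp only [hB, hB', Finset.sum_add_distrib]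
    have := hdom k hkr
    omega
  omega

lemma master_s15 (r M : ℕ) (p p' w : ℕ → ℕ)
    (hp : ∀ j k, j ≤ k → p k ≤ p j) (hp' : ∀ j k, j ≤ k → p' k ≤ p' j)
    (hdom : ∀ k, k ≤ r → ∑ j ∈ range k, p' j ≤ ∑ j ∈ range k, p j)
    (hsum : ∑ j ∈ range r, p' j = ∑ j ∈ range r, p j)
    (hw : ∀ s t, s ≤ t → w t ≤ w s)
    (hM : ∀ j, j < r → p j + r ≤ M) (hM' : ∀ j, j < r → p' j + r ≤ M) :
    2 * (∑ j ∈ range r, j * p j)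
        + ∑ t ∈ range M, 2 * w t * cnt r (fun j => p j + (r - 1 - j)) t
      ≤ 2 * (∑ j ∈ range r, j * p' j)
        + ∑ t ∈ range M, 2 * w t * cnt r (fun j => p' j + (r - 1 - j)) t := by
  set B : ℕ → ℕ := fun j => p j + (r - 1 - j) with hB
  set B' : ℕ → ℕ := fun j => p' j + (r - 1 - j) with hB'
  have hBM : ∀ j, j < r → B j ≤ M := by
    intro j hj; have := hM j hj; simp only [hB]; omega
  have hBM' : ∀ j, j < r → B' j ≤ M := by
    intro j hj; have := hM' j hj; simp only [hB']; omega
  have hBmono : ∀ j k, j ≤ k → k < r → B k ≤ B j := by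
    intro j k h1 h2; have := hp j k h1; simp only [hB]; omega
  have hBmono' : ∀ j k, j ≤ k → k < r → B' k ≤ B' j := by
    intro j k h1 h2; have := hp' j k h1; simp only [hB']; omega
  -- square identities
  have sq : ∑ t ∈ range M, cnt r B t * cnt r B t
      = 2 * (∑ m ∈ range r, m * p m) + ∑ m ∈ range r, p m
        + ∑ m ∈ range r, (2*m+1) * (r - 1 - m) := by
    rw [crossId r M B B hBM, maxsum r B hBmono]
    have : ∀ m ∈ range r, (2*m+1) * B m
        = 2 * (m * p m) + p m + (2*m+1) * (r - 1 - m) := by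
      intro m _; simp only [hB]; ring
    rw [Finset.sum_congr rfl this, Finset.sum_add_distrib, Finset.sum_add_distrib,
      ← Finset.mul_sum]
  have sq' : ∑ t ∈ range M, cnt r B' t * cnt r B' t
      = 2 * (∑ m ∈ range r, m * p' m) + ∑ m ∈ range r, p' m
        + ∑ m ∈ range r, (2*m+1) * (r - 1 - m) := by
    rw [crossId r M B' B' hBM', maxsum r B' hBmono']
    have : ∀ m ∈ range r, (2*m+1) * B' m
        = 2 * (m * p' m) + p' m + (2*m+1) * (r - 1 - m) := by
      intro m _; simp only [hB']; ring
    rw [Finset.sum_congr rfl this, Finset.sum_add_distrib, Finset.sum_add_distrib,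
      ← Finset.mul_sum]
  -- prefix comparison
  have pre : ∀ T, ∑ t ∈ range T, cnt r B t ≤ ∑ t ∈ range T, cnt r B' t := by
    intro T
    rw [cnt_prefix, cnt_prefix]
    exact prefix_le r T p p' hp' hdom hsum
  -- totals equal
  have tot : ∑ t ∈ range M, cnt r B t = ∑ t ∈ range M, cnt r B' t := by
    rw [cnt_prefix, cnt_prefix]
    have e1 : ∑ j ∈ range r, min (B j) M = ∑ j ∈ range r, B j :=
      Finset.sum_congr rfl (fun j hj => min_eq_left (hBM j (mem_range.mp hj)))
    have e2 : ∑ j ∈ range r, min (B' j) M = ∑ j ∈ range r, B' j :=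
      Finset.sum_congr rfl (fun j hj => min_eq_left (hBM' j (mem_range.mp hj)))
    rw [e1, e2]
    simp only [hB, hB', Finset.sum_add_distrib, hsum]
  -- Abel argument in ℤ
  have key : ∑ t ∈ range M, (cnt r B t * cnt r B t + 2 * w t * cnt r B t)
      ≤ ∑ t ∈ range M, (cnt r B' t * cnt r B' t + 2 * w t * cnt r B' t) := by
    set d : ℕ → ℤ := fun t => (cnt r B' t : ℤ) - cnt r B t with hd
    set c : ℕ → ℤ := fun t => (cnt r B' t : ℤ) + cnt r B t + 2 * w t with hc
    have hD : ∀ T, T ≤ M → 0 ≤ ∑ t ∈ range T, d t := by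
      intro T _
      simp only [hd, Finset.sum_sub_distrib]
      have := pre T
      have h1 : ((∑ t ∈ range T, cnt r B t : ℕ) : ℤ)
          ≤ ((∑ t ∈ range T, cnt r B' t : ℕ) : ℤ) := by exact_mod_cast this
      push_cast at h1
      linarith
    have hcmono : ∀ s t, s ≤ t → c t ≤ c s := by
      intro s t hst
      simp only [hc]
      have h1 := cnt_antitone r B hst
      have h2 := cnt_antitone r B' hst
      have h3 := hw s t hst
      have h1' : (cnt r B t : ℤ) ≤ cnt r B s := by exact_mod_cast h1
      have h2' : (cnt r B' t : ℤ) ≤ cnt r B' s := by exact_mod_cast h2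
      have h3' : (w t : ℤ) ≤ w s := by exact_mod_cast h3
      linarith
    have hd0 : ∑ t ∈ range M, d t = 0 := by
      simp only [hd, Finset.sum_sub_distrib]
      have : ((∑ t ∈ range M, cnt r B t : ℕ) : ℤ)
          = ((∑ t ∈ range M, cnt r B' t : ℕ) : ℤ) := by exact_mod_cast tot
      push_cast at this
      linarith
    have habel := abel_lemma M d c hD hcmono
    rw [hd0, zero_mul] at habel
    have hexp : ∑ t ∈ range M, d t * c t
        = ∑ t ∈ range M, (((cnt r B' t : ℤ) * cnt r B' t + 2 * w t * cnt r B' t)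
            - ((cnt r B t : ℤ) * cnt r B t + 2 * w t * cnt r B t)) := by
      apply Finset.sum_congr rfl
      intro t _
      simp only [hd, hc]
      ring
    rw [hexp, Finset.sum_sub_distrib] at habel
    have hZ : (∑ t ∈ range M, ((cnt r B t : ℤ) * cnt r B t + 2 * w t * cnt r B t))
        ≤ ∑ t ∈ range M, ((cnt r B' t : ℤ) * cnt r B' t + 2 * w t * cnt r B' t) := by
      linarith
    exact_mod_cast hZ
  -- assemble
  have splitsum : ∀ u : ℕ → ℕ,
      ∑ t ∈ range M, (cnt r u t * cnt r u t + 2 * w t * cnt r u t)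
      = ∑ t ∈ range M, cnt r u t * cnt r u t + ∑ t ∈ range M, 2 * w t * cnt r u t :=
    fun u => Finset.sum_add_distrib
  rw [splitsum B, splitsum B'] at key
  omega

lemma key1 (r : ℕ) (f g g' : ℕ → ℕ)
    (hf : ∀ j k, j ≤ k → f k ≤ f j) (hg : ∀ j k, j ≤ k → g k ≤ g j)
    (hg' : ∀ j k, j ≤ k → g' k ≤ g' j)
    (hdom : ∀ k, k ≤ r → ∑ j ∈ range k, g' j ≤ ∑ j ∈ range k, g j)
    (hsum : ∑ j ∈ range r, g' j = ∑ j ∈ range r, g j) :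
    2 * (∑ i ∈ range r, i * g i)
      + 2 * (∑ i ∈ range r, ∑ j ∈ range r, min (f i + (r - i)) (g j + (r - 1 - j)))
    ≤ 2 * (∑ i ∈ range r, i * g' i)
      + 2 * (∑ i ∈ range r, ∑ j ∈ range r, min (f i + (r - i)) (g' j + (r - 1 - j))) := by
  set M := f 0 + g 0 + g' 0 + r + 1 with hM
  set A : ℕ → ℕ := fun i => f i + (r - i) with hA
  have hAM : ∀ i, i < r → A i ≤ M := by
    intro i hi
    have := hf 0 i (Nat.zero_le i)
    simp only [hA, hM]
    omega
  have c1 := crossId r M A (fun j => g j + (r - 1 - j)) hAM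
  have c2 := crossId r M A (fun j => g' j + (r - 1 - j)) hAM
  have hm := master_s15 r M g g' (cnt r A) hg hg' hdom hsum
      (fun s t h => cnt_antitone r A h)
      (fun j hj => by have := hg 0 j (Nat.zero_le j); simp only [hM]; omega)
      (fun j hj => by have := hg' 0 j (Nat.zero_le j); simp only [hM]; omega)
  have e1 : ∑ t ∈ range M, 2 * cnt r A t * cnt r (fun j => g j + (r - 1 - j)) t
      = 2 * ∑ t ∈ range M, cnt r A t * cnt r (fun j => g j + (r - 1 - j)) t := by
    rw [Finset.mul_sum]
    exact Finset.sum_congr rfl (fun t _ => by ring)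
  have e2 : ∑ t ∈ range M, 2 * cnt r A t * cnt r (fun j => g' j + (r - 1 - j)) t
      = 2 * ∑ t ∈ range M, cnt r A t * cnt r (fun j => g' j + (r - 1 - j)) t := by
    rw [Finset.mul_sum]
    exact Finset.sum_congr rfl (fun t _ => by ring)
  rw [e1, e2, c1, c2] at hm
  simp only [hA] at hm
  omega

lemma key2 (r : ℕ) (f f' g' : ℕ → ℕ)
    (hf : ∀ j k, j ≤ k → f k ≤ f j) (hf' : ∀ j k, j ≤ k → f' k ≤ f' j)
    (hg' : ∀ j k, j ≤ k → g' k ≤ g' j)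
    (hdom : ∀ k, k ≤ r → ∑ j ∈ range k, f' j ≤ ∑ j ∈ range k, f j)
    (hsum : ∑ j ∈ range r, f' j = ∑ j ∈ range r, f j) :
    2 * (∑ i ∈ range r, i * f i)
      + 2 * (∑ i ∈ range r, ∑ j ∈ range r, min (f i + (r - i)) (g' j + (r - 1 - j)))
    ≤ 2 * (∑ i ∈ range r, i * f' i)
      + 2 * (∑ i ∈ range r, ∑ j ∈ range r, min (f' i + (r - i)) (g' j + (r - 1 - j))) := by
  set N := f 0 + f' 0 + g' 0 + r + 1 with hN
  set Q : ℕ → ℕ := fun j => g' j + (r - 1 - j) with hQ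
  set A : ℕ → ℕ := fun i => f i + (r - i) with hA
  set A' : ℕ → ℕ := fun i => f' i + (r - i) with hA'
  have hAM : ∀ i, i < r → A i ≤ N + 1 := by
    intro i hi
    have := hf 0 i (Nat.zero_le i)
    simp only [hA, hN]
    omega
  have hAM' : ∀ i, i < r → A' i ≤ N + 1 := by
    intro i hi
    have := hf' 0 i (Nat.zero_le i)
    simp only [hA', hN]
    omega
  have c1 := crossId r (N + 1) A Q hAM
  have c2 := crossId r (N + 1) A' Q hAM'
  have s1 : ∑ t ∈ range (N + 1), cnt r A t * cnt r Q t
      = cnt r A 0 * cnt r Q 0 + ∑ t ∈ range N, cnt r A (t + 1) * cnt r Q (t + 1) := by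
    rw [Finset.sum_range_succ' (fun t => cnt r A t * cnt r Q t) N]
    exact Nat.add_comm _ _
  have s2 : ∑ t ∈ range (N + 1), cnt r A' t * cnt r Q t
      = cnt r A' 0 * cnt r Q 0 + ∑ t ∈ range N, cnt r A' (t + 1) * cnt r Q (t + 1) := by
    rw [Finset.sum_range_succ' (fun t => cnt r A' t * cnt r Q t) N]
    exact Nat.add_comm _ _
  have cnt0 : cnt r A 0 = r := by
    unfold cnt
    rw [Finset.sum_congr rfl
      (fun i hi => if_pos (by have := mem_range.mp hi; simp only [hA]; omega))]
    simp
  have cnt0' : cnt r A' 0 = r := by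
    unfold cnt
    rw [Finset.sum_congr rfl
      (fun i hi => if_pos (by have := mem_range.mp hi; simp only [hA']; omega))]
    simp
  have csh : ∀ t, cnt r A (t + 1) = cnt r (fun j => f j + (r - 1 - j)) t := by
    intro t
    unfold cnt
    apply Finset.sum_congr rfl
    intro i hi
    have hi' := mem_range.mp hi
    refine if_congr ?_ rfl rfl
    simp only [hA]
    omega
  have csh' : ∀ t, cnt r A' (t + 1) = cnt r (fun j => f' j + (r - 1 - j)) t := by
    intro t
    unfold cnt
    apply Finset.sum_congr rfl
    intro i hi
    have hi' := mem_range.mp hi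
    refine if_congr ?_ rfl rfl
    simp only [hA']
    omega
  have hm := master_s15 r N f f' (fun t => cnt r Q (t + 1)) hf hf' hdom hsum
      (fun s t h => cnt_antitone r Q (by omega))
      (fun j hj => by have := hf 0 j (Nat.zero_le j); simp only [hN]; omega)
      (fun j hj => by have := hf' 0 j (Nat.zero_le j); simp only [hN]; omega)
  have e1 : ∑ t ∈ range N, 2 * cnt r Q (t + 1) * cnt r (fun j => f j + (r - 1 - j)) t
      = 2 * ∑ t ∈ range N, cnt r A (t + 1) * cnt r Q (t + 1) := by
    rw [Finset.mul_sum]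
    apply Finset.sum_congr rfl
    intro t _
    rw [csh t]
    ring
  have e2 : ∑ t ∈ range N, 2 * cnt r Q (t + 1) * cnt r (fun j => f' j + (r - 1 - j)) t
      = 2 * ∑ t ∈ range N, cnt r A' (t + 1) * cnt r Q (t + 1) := by
    rw [Finset.mul_sum]
    apply Finset.sum_congr rfl
    intro t _
    rw [csh' t]
    ring
  rw [e1, e2] at hm
  rw [cnt0] at s1
  rw [cnt0'] at s2
  simp only [hA, hA', hQ] at c1 c2 s1 s2 hm
  omega

lemma aB_eq (r : ℕ) (f g : ℕ → ℕ) :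
    aB r f g = -(1 / 6 : ℚ) * r * ((r : ℚ) - 1) * (2 * r + 5)
      + ∑ i ∈ range r, (i : ℚ) * ((f i : ℚ) + (g i : ℚ) + 1)
      + ((∑ i ∈ range r, ∑ j ∈ range r,
            min (f i + (r - i)) (g j + (r - 1 - j)) : ℕ) : ℚ) := by
  unfold aB
  congr 1
  rw [Nat.cast_sum]
  apply Finset.sum_congr rfl
  intro i hi
  rw [Nat.cast_sum]
  apply Finset.sum_congr rfl
  intro j hj
  have hi' := mem_range.mp hi
  have hj' := mem_range.mp hj
  rw [Nat.cast_min]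
  congr 1
  · push_cast [Nat.cast_sub (le_of_lt hi')]
    ring
  · have hrj : r - 1 - j = r - (j + 1) := by omega
    rw [hrj]
    push_cast [Nat.cast_sub (by omega : j + 1 ≤ r)]
    ring

/-- compatibility of the type-`B_n` `a`-function with the
Dipper–James dominance factorization: if `λ = (λ^(0),λ^(1))`,
`μ = (μ^(0),μ^(1))` are `2`-partitions of `n` with `|μ^(0)| = |λ^(0)|`,
`|μ^(1)| = |λ^(1)|`, `μ^(0) ⊴ λ^(0)` and `μ^(1) ⊴ λ^(1)`, then
`a(λ^(0),λ^(1)) ≤ a(λ^(0),μ^(1)) ≤ a(μ^(0),μ^(1))`. -/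
theorem stmt15 (r : ℕ)
    (f g f' g' : ℕ → ℕ)
    (hf : ∀ j k, j ≤ k → f k ≤ f j) (hg : ∀ j k, j ≤ k → g k ≤ g j)
    (hf' : ∀ j k, j ≤ k → f' k ≤ f' j) (hg' : ∀ j k, j ≤ k → g' k ≤ g' j)
    (hfr : ∀ i, r ≤ i → f i = 0) (hgr : ∀ i, r ≤ i → g i = 0)
    (hfr' : ∀ i, r ≤ i → f' i = 0) (hgr' : ∀ i, r ≤ i → g' i = 0)
    (hrank0 : ∑ i ∈ range r, f' i = ∑ i ∈ range r, f i)
    (hrank1 : ∑ i ∈ range r, g' i = ∑ i ∈ range r, g i)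
    (hdom0 : Dominates r f f') (hdom1 : Dominates r g g') :
    aB r f g ≤ aB r f g' ∧ aB r f g' ≤ aB r f' g' := by
  have hk1 := key1 r f g g' hf hg hg' (fun k hk => hdom1 k hk) hrank1
  have hk2 := key2 r f f' g' hf hf' hg' (fun k hk => hdom0 k hk) hrank0
  constructor
  · rw [aB_eq r f g, aB_eq r f g']
    have hmid : ∀ v : ℕ → ℕ, ∑ i ∈ range r, (i : ℚ) * ((f i : ℚ) + (v i : ℚ) + 1)
        = (∑ i ∈ range r, (i : ℚ) * (f i : ℚ))
          + ((∑ i ∈ range r, i * v i : ℕ) : ℚ) + ∑ i ∈ range r, (i : ℚ) := by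
      intro v
      rw [Nat.cast_sum, ← Finset.sum_add_distrib, ← Finset.sum_add_distrib]
      apply Finset.sum_congr rfl
      intro i _
      push_cast
      ring
    rw [hmid g, hmid g']
    have hc : 2 * ((∑ i ∈ range r, i * g i : ℕ) : ℚ)
          + 2 * ((∑ i ∈ range r, ∑ j ∈ range r,
              min (f i + (r - i)) (g j + (r - 1 - j)) : ℕ) : ℚ)
        ≤ 2 * ((∑ i ∈ range r, i * g' i : ℕ) : ℚ)
          + 2 * ((∑ i ∈ range r, ∑ j ∈ range r,
              min (f i + (r - i)) (g' j + (r - 1 - j)) : ℕ) : ℚ) := by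
      exact_mod_cast hk1
    linarith
  · rw [aB_eq r f g', aB_eq r f' g']
    have hmid : ∀ u : ℕ → ℕ, ∑ i ∈ range r, (i : ℚ) * ((u i : ℚ) + (g' i : ℚ) + 1)
        = ((∑ i ∈ range r, i * u i : ℕ) : ℚ)
          + (∑ i ∈ range r, (i : ℚ) * (g' i : ℚ)) + ∑ i ∈ range r, (i : ℚ) := by
      intro u
      rw [Nat.cast_sum, ← Finset.sum_add_distrib, ← Finset.sum_add_distrib]
      apply Finset.sum_congr rfl
      intro i _
      push_cast
      ring
    rw [hmid f, hmid f']
    have hc : 2 * ((∑ i ∈ range r, i * f i : ℕ) : ℚ)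
          + 2 * ((∑ i ∈ range r, ∑ j ∈ range r,
              min (f i + (r - i)) (g' j + (r - 1 - j)) : ℕ) : ℚ)
        ≤ 2 * ((∑ i ∈ range r, i * f' i : ℕ) : ℚ)
          + 2 * ((∑ i ∈ range r, ∑ j ∈ range r,
              min (f' i + (r - i)) (g' j + (r - 1 - j)) : ℕ) : ℚ) := by
      exact_mod_cast hk2
    linarith
end

section
/- Let λ be a FLOTW d-partition of rank n ≥ 1. Then its a-sequence of residues has length exactly n, and the multiset of residues in the a-sequence equals the multiset of residues of the nodes of λ. -/
def rankOf (d N : ℕ) (part : ℕ → ℕ → ℕ) : ℕ :=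
  ∑ c ∈ Finset.range d, ∑ r ∈ Finset.range N, part c r

inductive HasASeq (d e N : ℕ) (v : ℕ → ℕ) : (ℕ → ℕ → ℕ) → List (ZMod e) → Prop
  | nil (part : ℕ → ℕ → ℕ) (h : ∀ c r, part c r = 0) : HasASeq d e N v part []
  | step (part part' : ℕ → ℕ → ℕ) (k : ZMod e) (s : List (ZMod e))
      (hstep : AStep d e v part part' k) (hs : HasASeq d e N v part' s) :
      HasASeq d e N v part
        (s ++ List.replicate (rankOf d N part - rankOf d N part') k)

/-- The multiset of residues of the nodes of a `d`-partition (nodes in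
component `c < d`, row `r < N`, columns `1 ≤ b ≤ part c r`). -/
def resMultiset (d e N : ℕ) (v : ℕ → ℕ) (part : ℕ → ℕ → ℕ) : Multiset (ZMod e) :=
  ∑ c ∈ Finset.range d, ∑ r ∈ Finset.range N,
    (Finset.Icc 1 (part c r)).val.map
      (fun b => (((b : ℤ) - ((r : ℤ) + 1) + (v c : ℤ) : ℤ) : ZMod e))

/-- One column removed: the map over `Icc 1 a` splits off the top node. -/
lemma cell_split {e : ℕ} (a a' : ℕ) (g : ℕ → ZMod e) (k : ZMod e)
    (h : a' = a ∨ (a = a' + 1 ∧ g a = k)) :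
    (Finset.Icc 1 a).val.map g
      = (Finset.Icc 1 a').val.map g + Multiset.replicate (a - a') k := by
  rcases h with rfl | ⟨rfl, hg⟩
  · simp
  · have hins : Finset.Icc 1 (a' + 1) = insert (a' + 1) (Finset.Icc 1 a') := by
      ext x; simp only [Finset.mem_Icc, Finset.mem_insert]; omega
    have hnm : a' + 1 ∉ Finset.Icc 1 a' := by simp
    have hval : (Finset.Icc 1 (a' + 1)).val = (a' + 1) ::ₘ (Finset.Icc 1 a').val := by
      rw [hins, Finset.insert_val_of_notMem hnm]
    rw [hval, Multiset.map_cons, hg]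
    have : a' + 1 - a' = 1 := by omega
    rw [this, Multiset.replicate_one]
    rw [← Multiset.singleton_add, add_comm]

lemma hasASeq_key (d e N : ℕ) (v : ℕ → ℕ) (part : ℕ → ℕ → ℕ) (s : List (ZMod e))
    (hs : HasASeq d e N v part s) :
    s.length = rankOf d N part ∧
      (s : Multiset (ZMod e)) = resMultiset d e N v part := by
  induction hs with
  | nil part h0 => simp [rankOf, resMultiset, h0]
  | step part part' k s hstep hs ih =>
    obtain ⟨lmax, T, c0, r0, -, -, -, -, -, -, -, -, -, hdef⟩ := hstep
    have hle : ∀ c r, part' c r ≤ part c r := fun c r => by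
      rw [hdef c r]; exact Nat.sub_le _ _
    have hcase : ∀ c r, part' c r = part c r ∨
        (part c r = part' c r + 1 ∧ bres e v part c r = k) := by
      intro c r
      rw [hdef c r]
      by_cases hc : Removable part c r ∧ bres e v part c r = k ∧ T < part c r
      · right
        refine ⟨?_, hc.2.1⟩
        have : 0 < part c r := hc.1.1
        simp [hc]; omega
      · left; simp [hc]
    have hranks : rankOf d N part' ≤ rankOf d N part := by
      apply Finset.sum_le_sum; intro c _; apply Finset.sum_le_sum; intro r _
      exact hle c r
    have hdiff : rankOf d N part - rankOf d N part'
        = ∑ c ∈ Finset.range d, ∑ r ∈ Finset.range N, (part c r - part' c r) := by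
      have : rankOf d N part' + (∑ c ∈ Finset.range d, ∑ r ∈ Finset.range N,
          (part c r - part' c r)) = rankOf d N part := by
        unfold rankOf
        rw [← Finset.sum_add_distrib]
        apply Finset.sum_congr rfl; intro c _
        rw [← Finset.sum_add_distrib]
        apply Finset.sum_congr rfl; intro r _
        have := hle c r; omega
      omega
    refine ⟨?_, ?_⟩
    · rw [List.length_append, List.length_replicate, ih.1]; omega
    · rw [← Multiset.coe_add, Multiset.coe_replicate, ih.2, hdiff]
      unfold resMultiset
      have : (Multiset.replicate (∑ c ∈ Finset.range d, ∑ r ∈ Finset.range N,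
            (part c r - part' c r)) k)
          = ∑ c ∈ Finset.range d, ∑ r ∈ Finset.range N,
              Multiset.replicate (part c r - part' c r) k := by
        rw [← Multiset.nsmul_singleton, Finset.sum_smul]
        apply Finset.sum_congr rfl; intro c _
        rw [Finset.sum_smul]
        apply Finset.sum_congr rfl; intro r _
        rw [Multiset.nsmul_singleton]
      rw [this, ← Finset.sum_add_distrib]
      apply Finset.sum_congr rfl; intro c _
      rw [← Finset.sum_add_distrib]
      apply Finset.sum_congr rfl; intro r _
      simp only [Multiset.pure_def, Multiset.bind_def, Multiset.bind_singleton, Multiset.map_map]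
      symm
      apply cell_split
      rcases hcase c r with h | ⟨h1, h2⟩
      · left; exact h
      · right; refine ⟨h1, ?_⟩
        simpa [bres] using h2

/-- if `λ` is a FLOTW `d`-partition of rank `n ≥ 1`, its
`a`-sequence of residues has length exactly `n`, and the multiset of residues
appearing in the `a`-sequence equals the multiset of residues of the nodes of
`λ`. -/
theorem stmt17 (d e n N : ℕ) (hd : 0 < d) (he : 0 < e) (hn : 1 ≤ n)
    (v : ℕ → ℕ) (hvmono : ∀ i j, i ≤ j → v i ≤ v j) (hve : ∀ i, i < d → v i < e)
    (part : ℕ → ℕ → ℕ) (hflotw : IsFLOTW d e v part)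
    (hN : ∀ c r, N ≤ r → part c r = 0)
    (hrank : rankOf d N part = n)
    (s : List (ZMod e)) (hs : HasASeq d e N v part s) :
    s.length = n ∧ (s : Multiset (ZMod e)) = resMultiset d e N v part := by
  have := hasASeq_key d e N v part s hs
  exact ⟨hrank ▸ this.1, this.2⟩
end

section
/- Suppose the a-sequence construction removes the removable k-nodes ξ_1,...,ξ_u of λ lying on parts strictly longer than λ^(l_1)_{p_1}, the largest part carrying a border (k−1)-node. Then for each such removed node on part λ^(i_t)_{j_t} and each border (k−1)-node on part λ^(l_r)_{p_r}, one has λ^(i_t)_{j_t} − j_t + m^(i_t) − 1 > λ^(l_r)_{p_r} − p_r + m^(l_r). -/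
/-- Chaining the adjacent-component FLOTW condition. -/
lemma flotw_chain (d e : ℕ) (v : ℕ → ℕ) (part : ℕ → ℕ → ℕ)
    (hflotw : IsFLOTW d e v part) (hvmono : ∀ i j, i ≤ j → v i ≤ v j)
    {c c₂ : ℕ} (h : c ≤ c₂) (h2 : c₂ < d) (i : ℕ) :
    part c₂ (i + (v c₂ - v c)) ≤ part c i := by
  induction c₂ with
  | zero =>
    have : c = 0 := by omega
    subst this; simp
  | succ n ih =>
    rcases Nat.lt_or_ge c (n + 1) with hcn | hcn
    · have hcn' : c ≤ n := by omega
      have h1 := ih hcn' (by omega)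
      have h2' := hflotw.2.1 n (by omega) (i + (v n - v c))
      have hv1 : v c ≤ v n := hvmono _ _ hcn'
      have hv2 : v n ≤ v (n + 1) := hvmono _ _ (by omega)
      have hidx : i + (v (n + 1) - v c) = (i + (v n - v c)) + (v (n + 1) - v n) := by
        omega
      rw [hidx]
      exact le_trans h2' h1
    · have : c = n + 1 := by omega
      subst this; simp

/-- Wrap-around comparison in a FLOTW multipartition. -/
lemma flotw_wrap (d e : ℕ) (hd : 0 < d) (v : ℕ → ℕ) (part : ℕ → ℕ → ℕ)
    (hflotw : IsFLOTW d e v part) (hvmono : ∀ i j, i ≤ j → v i ≤ v j)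
    (hve : ∀ i, i < d → v i < e)
    {c c₂ : ℕ} (hc : c < d) (hc₂ : c₂ < d) (i : ℕ) :
    part c (i + (e + v c - v c₂)) ≤ part c₂ i := by
  have h1 : part (d - 1) (i + (v (d - 1) - v c₂)) ≤ part c₂ i :=
    flotw_chain d e v part hflotw hvmono (by omega) (by omega) i
  have h2 := hflotw.2.2.1 (i + (v (d - 1) - v c₂))
  have h3 : part c ((i + (v (d - 1) - v c₂) + (e + v 0 - v (d - 1))) + (v c - v 0)) ≤
      part 0 (i + (v (d - 1) - v c₂) + (e + v 0 - v (d - 1))) :=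
    flotw_chain d e v part hflotw hvmono (Nat.zero_le c) hc _
  have hv1 : v c₂ ≤ v (d - 1) := hvmono _ _ (by omega)
  have hv2 : v 0 ≤ v c := hvmono _ _ (Nat.zero_le c)
  have hv3 : v (d - 1) < e := hve _ (by omega)
  have hv4 : v 0 ≤ v (d - 1) := hvmono _ _ (Nat.zero_le _)
  have hidx : (i + (v (d - 1) - v c₂) + (e + v 0 - v (d - 1))) + (v c - v 0)
      = i + (e + v c - v c₂) := by omega
  rw [hidx] at h3
  exact le_trans h3 (le_trans h2 h1)

/-- in the `a`-sequence construction, suppose the removable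
`k`-node `ξ_t` on the part `λ^(i_t)_{j_t}` is one of the removed nodes (its
part is strictly longer than every part carrying a border `(k−1)`-node), and
let `λ^(l_r)_{p_r}` be a part carrying a border `(k−1)`-node.  Then (rows
indexed from `0`, with `(c,r) = (i_t, j_t−1)` and `(c₂,r₂) = (l_r, p_r−1)`)
`λ^(i_t)_{j_t} − j_t + m^(i_t) − 1 > λ^(l_r)_{p_r} − p_r + m^(l_r)`. -/
theorem stmt18 (d e e' sh : ℕ) (hd : 0 < d) (he : 0 < e) (hee : e = d * e')
    (v : ℕ → ℕ) (hvmono : ∀ i j, i ≤ j → v i ≤ v j) (hve : ∀ i, i < d → v i < e)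
    (m : ℕ → ℤ)
    (hm : ∀ j, m j = (v j : ℤ) - (j : ℤ) * (e' : ℤ) + (sh : ℤ) * (e : ℤ))
    (hm0 : ∀ j, j < d → 0 ≤ m j)
    (part : ℕ → ℕ → ℕ) (hflotw : IsFLOTW d e v part)
    (hfin : ∃ N, ∀ c r, N ≤ r → part c r = 0)
    (k : ZMod e) (c r c₂ r₂ : ℕ) (hc : c < d) (hc₂ : c₂ < d)
    (hrem : Removable part c r) (hkres : bres e v part c r = k)
    (hpos₂ : 0 < part c₂ r₂) (hk1res : bres e v part c₂ r₂ = k - 1)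
    (hgt : part c₂ r₂ < part c r) :
    (part c₂ r₂ : ℤ) - ((r₂ : ℤ) + 1) + m c₂ <
      (part c r : ℤ) - ((r : ℤ) + 1) + m c - 1 := by
  haveI : NeZero e := ⟨he.ne'⟩
  have he' : 0 < e' := by
    rcases Nat.eq_zero_or_pos e' with h | h
    · subst h; simp at hee; omega
    · exact h
  set A : ℤ := (part c r : ℤ) - ((r : ℤ) + 1) + (v c : ℤ) with hA
  set B : ℤ := (part c₂ r₂ : ℤ) - ((r₂ : ℤ) + 1) + (v c₂ : ℤ) with hB
  have hz : ((A - B - 1 : ℤ) : ZMod e) = 0 := by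
    have h1 : ((A : ℤ) : ZMod e) = k := hkres
    have h2 : ((B : ℤ) : ZMod e) = k - 1 := hk1res
    push_cast
    push_cast at h1 h2
    linear_combination h1 - h2
  have hdvd : (e : ℤ) ∣ A - B - 1 := (ZMod.intCast_zmod_eq_zero_iff_dvd _ e).mp hz
  obtain ⟨q, hq⟩ := hdvd
  have hepos : (0 : ℤ) < e := by exact_mod_cast he
  have hmono := hflotw.1
  -- goal reduces to (c - c₂) * e' < A - B - 1
  rw [hm c₂, hm c]
  have hkey : ((c : ℤ) - (c₂ : ℤ)) * (e' : ℤ) < A - B - 1 := by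
    rcases le_or_gt c₂ c with hcc | hcc
    · -- same or later component: A - B ≥ 2, hence ≥ e + 1
      have hAB : 2 ≤ A - B := by
        by_contra hcon
        push_neg at hcon
        have hvle : v c₂ ≤ v c := hvmono _ _ hcc
        have hr : r₂ + (v c - v c₂) ≤ r := by
          simp only [hA, hB] at hcon
          omega
        have h1 : part c r ≤ part c (r₂ + (v c - v c₂)) := hmono c _ _ hr
        have h2 : part c (r₂ + (v c - v c₂)) ≤ part c₂ r₂ :=
          flotw_chain d e v part hflotw hvmono hcc hc r₂
        omega
      have hq1 : 1 ≤ q := by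
        by_contra hcon
        push_neg at hcon
        have hq0 : q ≤ 0 := by omega
        have : (e : ℤ) * q ≤ 0 := mul_nonpos_of_nonneg_of_nonpos (le_of_lt hepos) hq0
        omega
      have h1 : (e : ℤ) ≤ (e : ℤ) * q := le_mul_of_one_le_right (le_of_lt hepos) hq1
      have h2 : ((c : ℤ) - (c₂ : ℤ)) * (e' : ℤ) ≤ ((d : ℤ) - 1) * (e' : ℤ) := by
        have : (c : ℤ) - (c₂ : ℤ) ≤ (d : ℤ) - 1 := by
          have : (c : ℤ) < d := by exact_mod_cast hc
          omega
        exact mul_le_mul_of_nonneg_right this (by positivity)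
      have hde : ((d : ℤ) - 1) * (e' : ℤ) = (e : ℤ) - (e' : ℤ) := by
        have : (e : ℤ) = (d : ℤ) * (e' : ℤ) := by exact_mod_cast hee
        linarith [this, mul_one_sub (d : ℤ) (e' : ℤ)]
      have he'pos : (0 : ℤ) < e' := by exact_mod_cast he'
      linarith
    · -- earlier component: A - B ≥ 1, and (c - c₂) * e' < 0
      have hAB : 1 ≤ A - B := by
        by_contra hcon
        push_neg at hcon
        have hq0 : q ≤ -1 := by
          by_contra hcon2
          push_neg at hcon2
          have hq0 : 0 ≤ q := by omega
          have : (0 : ℤ) ≤ (e : ℤ) * q := mul_nonneg (le_of_lt hepos) hq0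
          omega
        have hle : (e : ℤ) * q ≤ -(e : ℤ) := by
          have := mul_le_mul_of_nonneg_left hq0 (le_of_lt hepos)
          linarith
        have hvlt : v c₂ < e := hve _ hc₂
        have hr : r₂ + (e + v c - v c₂) ≤ r := by
          simp only [hA, hB] at hcon
          omega
        have h1 : part c r ≤ part c (r₂ + (e + v c - v c₂)) := hmono c _ _ hr
        have h2 : part c (r₂ + (e + v c - v c₂)) ≤ part c₂ r₂ :=
          flotw_wrap d e hd v part hflotw hvmono hve hc hc₂ r₂
        omega
      have hq0 : 0 ≤ q := by
        by_contra hcon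
        push_neg at hcon
        have hq1 : q ≤ -1 := by omega
        have : (e : ℤ) * q ≤ -(e : ℤ) := by
          have := mul_le_mul_of_nonneg_left hq1 (le_of_lt hepos)
          linarith
        omega
      have h1 : (0 : ℤ) ≤ (e : ℤ) * q := mul_nonneg (le_of_lt hepos) hq0
      have h2 : ((c : ℤ) - (c₂ : ℤ)) * (e' : ℤ) < 0 := by
        have hcclt : (c : ℤ) < c₂ := by exact_mod_cast hcc
        have he'pos : (0 : ℤ) < e' := by exact_mod_cast he'
        have : (c : ℤ) - (c₂ : ℤ) < 0 := by linarith
        exact mul_neg_of_neg_of_pos this he'pos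
      linarith
  simp only [hA, hB] at hkey
  linarith [hkey, mul_comm (c : ℤ) (e' : ℤ)]
end
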